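/- arXiv:2111.12551 — 4 statements merged into one kernel-verified Lean document; each statement's English description precedes it below -/
import Mathlib

section
/- If the limit of π(x)·log(x)/x as x → ∞ exists and equals some constant c, then c = 1; equivalently, liminf_{x→∞} π(x)/(x/log x) ≤ 1 ≤ limsup_{x→∞} π(x)/(x/log x). -/
open Filter Real

noncomputable def primePi (x : ℝ) : ℝ :=
  ((Finset.Iic ⌊x⌋₊).filter Nat.Prime).card

/-- prime counting over naturals -/
noncomputable def pin (n : ℕ) : ℝ := ((Finset.Iic n).filter Nat.Prime).card

/-- Chebyshev theta over naturals -/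
noncomputable def theta (n : ℕ) : ℝ :=
  ∑ p ∈ (Finset.Iic n).filter Nat.Prime, Real.log p

lemma pin_nonneg (n : ℕ) : 0 ≤ pin n := Nat.cast_nonneg _

lemma pin_le (n : ℕ) : pin n ≤ n := by
  have hsub : (Finset.Iic n).filter Nat.Prime ⊆ Finset.Icc 1 n := by
    intro p hp
    simp only [Finset.mem_filter, Finset.mem_Iic] at hp
    exact Finset.mem_Icc.2 ⟨hp.2.one_lt.le.trans' (by norm_num), hp.1⟩
  have := Finset.card_le_card hsub
  rw [Nat.card_Icc] at this
  have h2 : ((Finset.Iic n).filter Nat.Prime).card ≤ n := le_trans this (by omega)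
  unfold pin; exact_mod_cast h2

lemma theta_nonneg (n : ℕ) : 0 ≤ theta n := by
  apply Finset.sum_nonneg
  intro p hp
  simp only [Finset.mem_filter] at hp
  exact Real.log_nonneg (by exact_mod_cast hp.2.one_lt.le)

lemma theta_mono : Monotone theta := by
  intro a b hab
  apply Finset.sum_le_sum_of_subset_of_nonneg
  · exact Finset.filter_subset_filter _ (Finset.Iic_subset_Iic.2 hab)
  · intro p hp _
    simp only [Finset.mem_filter] at hp
    exact Real.log_nonneg (by exact_mod_cast hp.2.one_lt.le)

lemma theta_le (n : ℕ) : theta n ≤ pin n * Real.log n := by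
  rw [pin, ← nsmul_eq_mul]
  apply Finset.sum_le_card_nsmul
  intro p hp
  simp only [Finset.mem_filter, Finset.mem_Iic] at hp
  exact Real.log_le_log (by exact_mod_cast hp.2.pos) (by exact_mod_cast hp.1)

lemma theta_le_self_mul_log (n : ℕ) : theta n ≤ n * Real.log n := by
  rcases Nat.eq_zero_or_pos n with h | h
  · simp only [h]; have : theta 0 = 0 := by
      unfold theta
      rw [Finset.filter_eq_empty_iff.2]
      · simp
      · intro p hp
        simp only [Finset.mem_Iic, Nat.le_zero] at hp
        subst hp; exact Nat.not_prime_zero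
    rw [this]; simp
  · exact (theta_le n).trans (by
      apply mul_le_mul_of_nonneg_right (pin_le n)
      exact Real.log_natCast_nonneg n)

lemma pi_tendsto_nat (c : ℝ)
    (h : Tendsto (fun x : ℝ => primePi x / (x / Real.log x)) atTop (nhds c)) :
    Tendsto (fun n : ℕ => pin n * Real.log n / n) atTop (nhds c) := by
  have h2 := h.comp (tendsto_natCast_atTop_atTop (R := ℝ))
  apply h2.congr
  intro n
  simp only [Function.comp_apply, primePi, Nat.floor_natCast, pin]
  rw [div_div_eq_mul_div]

lemma theta_lower (n : ℕ) (hn : 2 ≤ n) {δ : ℝ} (hδ0 : 0 < δ) (hδ1 : δ < 1) :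
    (pin n - (n : ℝ) ^ (1 - δ)) * ((1 - δ) * Real.log n) ≤ theta n := by
  have hn0 : (0:ℝ) < n := by positivity
  set m := ⌊(n:ℝ) ^ (1 - δ)⌋₊ with hm
  set s := (Finset.Iic n).filter Nat.Prime with hs
  set s' := s.filter (fun p => m < p) with hs'
  have hlogn : 0 ≤ (1 - δ) * Real.log n := by
    apply mul_nonneg (by linarith)
    exact Real.log_natCast_nonneg n
  have h1 : (s'.card : ℝ) * ((1 - δ) * Real.log n) ≤ theta n := by
    have step1 : ∑ p ∈ s', Real.log p ≤ theta n := by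
      apply Finset.sum_le_sum_of_subset_of_nonneg (Finset.filter_subset _ _)
      intro p hp _
      simp only [hs, Finset.mem_filter] at hp
      exact Real.log_nonneg (by exact_mod_cast hp.2.one_lt.le)
    refine le_trans ?_ step1
    rw [← nsmul_eq_mul]
    apply Finset.card_nsmul_le_sum
    intro p hp
    simp only [hs', hs, Finset.mem_filter] at hp
    have hpm : ((n:ℝ) ^ (1 - δ)) < p := by
      calc (n:ℝ) ^ (1 - δ) < m + 1 := Nat.lt_floor_add_one _
        _ ≤ p := by exact_mod_cast hp.2
    calc (1 - δ) * Real.log n = Real.log ((n:ℝ) ^ (1 - δ)) := (Real.log_rpow hn0 _).symm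
      _ ≤ Real.log p := Real.log_le_log (by positivity) hpm.le
  have h2 : pin n - (n:ℝ) ^ (1 - δ) ≤ s'.card := by
    have hsplit := Finset.card_filter_add_card_filter_not (s := s)
      (p := fun p => m < p)
    have hsub2 : (s.filter (fun p => ¬ m < p)).card ≤ ((Finset.Iic m).filter Nat.Prime).card := by
      apply Finset.card_le_card
      intro p hp
      simp only [hs, Finset.mem_filter, Finset.mem_Iic, not_lt] at hp ⊢
      exact ⟨hp.2, hp.1.2⟩
    have hpinm : (((Finset.Iic m).filter Nat.Prime).card : ℝ) ≤ (n:ℝ) ^ (1 - δ) := by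
      calc (((Finset.Iic m).filter Nat.Prime).card : ℝ) ≤ m := pin_le m
        _ ≤ (n:ℝ) ^ (1 - δ) := Nat.floor_le (by positivity)
    have : (s.card : ℝ) ≤ s'.card + (n:ℝ) ^ (1 - δ) := by
      have : s.card = s'.card + (s.filter (fun p => ¬ m < p)).card := hsplit.symm
      rw [this]
      push_cast
      have : ((s.filter (fun p => ¬ m < p)).card : ℝ) ≤ (n:ℝ) ^ (1 - δ) :=
        le_trans (by exact_mod_cast hsub2) hpinm
      linarith
    have hpin : pin n = (s.card : ℝ) := rfl
    linarith
  calc (pin n - (n : ℝ) ^ (1 - δ)) * ((1 - δ) * Real.log n)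
      ≤ (s'.card : ℝ) * ((1 - δ) * Real.log n) := by
        apply mul_le_mul_of_nonneg_right h2 hlogn
    _ ≤ theta n := h1

lemma theta_tendsto (c : ℝ) (hc : 0 ≤ c)
    (hπ : Tendsto (fun n : ℕ => pin n * Real.log n / n) atTop (nhds c)) :
    Tendsto (fun n : ℕ => theta n / n) atTop (nhds c) := by
  rw [tendsto_order]
  constructor
  · intro a ha
    set δ := min (1/2) ((c - a)/(2*(c+2))) with hδdef
    have hca : 0 < c - a := by linarith
    have hc2 : (0:ℝ) < c + 2 := by linarith
    have hδ0 : 0 < δ := lt_min (by norm_num) (by positivity)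
    have hδ2 : δ ≤ 1/2 := min_le_left _ _
    have hδ3 : δ * (c + 2) ≤ (c - a)/2 := by
      calc δ * (c + 2) ≤ ((c - a)/(2*(c+2))) * (c + 2) := by
            apply mul_le_mul_of_nonneg_right (min_le_right _ _) hc2.le
        _ = (c - a)/2 := by field_simp
    have hlog : Tendsto (fun n : ℕ => Real.log n / (n:ℝ) ^ δ) atTop (nhds 0) :=
      ((isLittleO_log_rpow_atTop hδ0).tendsto_div_nhds_zero).comp
        (tendsto_natCast_atTop_atTop (R := ℝ))
    filter_upwards [eventually_ge_atTop 2,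
      hπ.eventually (eventually_gt_nhds (show c - δ < c by linarith)),
      hlog.eventually (eventually_lt_nhds hδ0)] with n hn2 hπn hlogn
    have hn0 : (0:ℝ) < n := by positivity
    have key := theta_lower n hn2 hδ0 (by linarith)
    have hrw : (n:ℝ) ^ (1 - δ) * Real.log n / n = Real.log n / (n:ℝ) ^ δ := by
      rw [Real.rpow_sub hn0, Real.rpow_one]
      have h0 : (n:ℝ) ^ δ ≠ 0 := by positivity
      field_simp
    have step : (1 - δ) * (pin n * Real.log n / n) - (1 - δ) * (Real.log n / (n:ℝ) ^ δ)
        ≤ theta n / n := by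
      rw [← hrw]
      have expand : (1 - δ) * (pin n * Real.log n / n)
          - (1 - δ) * ((n:ℝ) ^ (1 - δ) * Real.log n / n)
          = (pin n - (n : ℝ) ^ (1 - δ)) * ((1 - δ) * Real.log n) / n := by
        field_simp
      rw [expand]
      exact (div_le_div_iff_of_pos_right hn0).2 key
    have est : a < (1 - δ) * (pin n * Real.log n / n) - (1 - δ) * (Real.log n / (n:ℝ) ^ δ) := by
      have h1d : (0:ℝ) < 1 - δ := by linarith
      have hY : 0 ≤ Real.log n / (n:ℝ) ^ δ := by
        apply div_nonneg (Real.log_natCast_nonneg n) (by positivity)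
      nlinarith [mul_lt_mul_of_pos_left hπn h1d, mul_lt_mul_of_pos_left hlogn h1d]
    linarith
  · intro a ha
    filter_upwards [eventually_ge_atTop 1,
      hπ.eventually (eventually_lt_nhds ha)] with n hn1 hπn
    have hn0 : (0:ℝ) < n := by positivity
    calc theta n / n ≤ pin n * Real.log n / n := by
          apply (div_le_div_iff_of_pos_right hn0).2
          calc theta n ≤ pin n * Real.log n := theta_le n
            _ = pin n * Real.log n := rfl
      _ < a := hπn
    
/-- The partial sums version of `log n!` via Legendre's formula. -/
lemma log_factorial_eq (n : ℕ) :
    Real.log (Nat.factorial n) =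
      ∑ p ∈ (Finset.Iic n).filter Nat.Prime,
        ((∑ i ∈ Finset.Ico 1 (n + 1), (n / p ^ i : ℕ) : ℕ) : ℝ) * Real.log p := by
  have hfac : ((Nat.factorial n : ℕ) : ℝ) ≠ 0 := by exact_mod_cast (Nat.factorial_pos n).ne'
  have hset : (Nat.factorial n).primeFactors = (Finset.Iic n).filter Nat.Prime := by
    ext p
    simp only [Nat.mem_primeFactors, Finset.mem_filter, Finset.mem_Iic]
    constructor
    · rintro ⟨hp, hdvd, -⟩
      exact ⟨(Nat.Prime.dvd_factorial hp).1 hdvd, hp⟩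
    · rintro ⟨hle, hp⟩
      exact ⟨hp, (Nat.Prime.dvd_factorial hp).2 hle, (Nat.factorial_pos n).ne'⟩
  have h1 : (Nat.factorial n : ℕ) = ∏ p ∈ (Nat.factorial n).primeFactors, p ^ (Nat.factorial n).factorization p := by
    conv_lhs => rw [← Nat.factorization_prod_pow_eq_self (Nat.factorial_pos n).ne']
    rfl
  calc Real.log (Nat.factorial n) = Real.log (∏ p ∈ (Nat.factorial n).primeFactors, (p : ℝ) ^ (Nat.factorial n).factorization p) := by
        conv_lhs => rw [h1]
        push_cast
        rfl
    _ = ∑ p ∈ (Nat.factorial n).primeFactors, Real.log ((p : ℝ) ^ (Nat.factorial n).factorization p) := by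
        apply Real.log_prod
        intro p hp
        have := (Nat.mem_primeFactors.1 hp).1.pos
        positivity
    _ = ∑ p ∈ (Finset.Iic n).filter Nat.Prime,
        ((∑ i ∈ Finset.Ico 1 (n + 1), (n / p ^ i : ℕ) : ℕ) : ℝ) * Real.log p := by
        rw [hset]
        apply Finset.sum_congr rfl
        intro p hp
        simp only [Finset.mem_filter, Finset.mem_Iic] at hp
        haveI := Fact.mk hp.2
        rw [Real.log_pow]
        congr 1
        rw [Nat.factorization_def _ hp.2]
        rw [padicValNat_factorial (Nat.lt_succ_of_le (Nat.log_le_self p n))]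

noncomputable def Sfun (n : ℕ) : ℝ :=
  ∑ p ∈ (Finset.Iic n).filter Nat.Prime, ((n / p : ℕ) : ℝ) * Real.log p

lemma summable_logdiv : Summable (fun m : ℕ => Real.log m / (m : ℝ) ^ 2) := by
  apply Summable.of_nonneg_of_le (fun m => ?_) (fun m => ?_)
    ((Real.summable_one_div_nat_rpow.2 (show (1:ℝ) < 3/2 by norm_num)).mul_left 2)
  · rcases Nat.eq_zero_or_pos m with h | h
    · simp [h]
    · apply div_nonneg (Real.log_natCast_nonneg m) (by positivity)
  · rcases Nat.eq_zero_or_pos m with h | h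
    · simp [h]
    · have hm1 : (1:ℝ) ≤ m := by exact_mod_cast h
      have hm0 : (0:ℝ) < m := by linarith
      have hsq : Real.sqrt m > 0 := Real.sqrt_pos.2 hm0
      have hlog : Real.log m ≤ 2 * Real.sqrt m := by
        have h2 : Real.log (Real.sqrt m) = Real.log m / 2 := Real.log_sqrt hm0.le
        rw [show Real.log (m:ℝ) = 2 * Real.log (Real.sqrt m) by rw [h2]; ring]
        have := Real.log_le_sub_one_of_pos hsq
        nlinarith [Real.sqrt_nonneg (m:ℝ)]
      have hrpow : (m : ℝ) ^ (3/2 : ℝ) = m * Real.sqrt m := by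
        rw [show (3/2 : ℝ) = 1 + 1/2 by norm_num, Real.rpow_add hm0, Real.rpow_one,
          ← Real.sqrt_eq_rpow]
      rw [div_le_iff₀ (by positivity), one_div, hrpow]
      rw [show 2 * ((m:ℝ) * Real.sqrt m)⁻¹ * (m:ℝ)^2
          = (2 * Real.sqrt m) * ((m:ℝ)^2 / ((m:ℝ) * Real.sqrt m) / Real.sqrt m) by
        field_simp]
      have heq1 : (m:ℝ)^2 / ((m:ℝ) * Real.sqrt m) / Real.sqrt m = 1 := by
        rw [div_div]
        rw [show (m:ℝ) * Real.sqrt m * Real.sqrt m = (m:ℝ)^2 by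
          rw [mul_assoc, Real.mul_self_sqrt hm0.le]; ring]
        exact div_self (by positivity)
      rw [heq1, mul_one]
      exact hlog

noncomputable def Kc : ℝ := ∑' m : ℕ, Real.log m / (m : ℝ) ^ 2

lemma logdiv_nonneg (m : ℕ) : 0 ≤ Real.log m / (m : ℝ) ^ 2 := by
  rcases Nat.eq_zero_or_pos m with h | h
  · simp [h]
  · exact div_nonneg (Real.log_natCast_nonneg m) (by positivity)

lemma inner_split {n p : ℕ} (hp : p.Prime) (hpn : p ≤ n) :
    ((∑ i ∈ Finset.Ico 1 (n + 1), (n / p ^ i : ℕ) : ℕ) : ℝ)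
      = ((n / p : ℕ) : ℝ) + ((∑ i ∈ Finset.Ico 2 (n + 1), (n / p ^ i : ℕ) : ℕ) : ℝ) := by
  have h2 : 1 < n + 1 := by
    have := hp.two_le; omega
  rw [Finset.sum_eq_sum_Ico_succ_bot h2]
  push_cast [pow_one]
  ring

lemma tail_le {n p : ℕ} (hp : p.Prime) (hpn : p ≤ n) :
    ((∑ i ∈ Finset.Ico 2 (n + 1), (n / p ^ i : ℕ) : ℕ) : ℝ) ≤ 2 * n / (p : ℝ) ^ 2 := by
  have hp2 : (2:ℝ) ≤ p := by exact_mod_cast hp.two_le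
  have hp0 : (0:ℝ) < p := by linarith
  set r : ℝ := (p : ℝ)⁻¹ with hr
  have hr0 : 0 < r := by positivity
  have hrhalf : r ≤ 1/2 := by
    rw [hr]
    rw [inv_le_comm₀ hp0 (by norm_num)]
    linarith
  have hrne : r ≠ 1 := by linarith
  have h2n1 : 2 ≤ n + 1 := by have := hp.two_le; omega
  calc ((∑ i ∈ Finset.Ico 2 (n + 1), (n / p ^ i : ℕ) : ℕ) : ℝ)
      = ∑ i ∈ Finset.Ico 2 (n + 1), ((n / p ^ i : ℕ) : ℝ) := by push_cast; ring
    _ ≤ ∑ i ∈ Finset.Ico 2 (n + 1), (n : ℝ) * r ^ i := by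
        apply Finset.sum_le_sum
        intro i _
        calc ((n / p ^ i : ℕ) : ℝ) ≤ (n : ℝ) / ((p^i : ℕ) : ℝ) := Nat.cast_div_le
          _ = (n : ℝ) * r ^ i := by
              push_cast
              rw [div_eq_mul_inv, hr, inv_pow]
    _ = (n : ℝ) * ((r ^ (n+1) - r ^ 2) / (r - 1)) := by
        rw [← Finset.mul_sum, geom_sum_Ico hrne h2n1]
    _ ≤ 2 * n / (p : ℝ) ^ 2 := by
        have key : (r ^ (n+1) - r ^ 2) / (r - 1) ≤ 2 * r ^ 2 := by
          rw [div_le_iff_of_neg (by linarith : r - 1 < 0)]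
          have h1 : r ^ (n+1) ≥ 0 := by positivity
          nlinarith [pow_nonneg hr0.le 2]
        calc (n : ℝ) * ((r ^ (n+1) - r ^ 2) / (r - 1)) ≤ (n : ℝ) * (2 * r ^ 2) := by
              apply mul_le_mul_of_nonneg_left key (Nat.cast_nonneg n)
          _ = 2 * n / (p : ℝ) ^ 2 := by
              rw [hr, inv_pow]
              field_simp
  
lemma Sfun_le_log_factorial (n : ℕ) : Sfun n ≤ Real.log (Nat.factorial n) := by
  rw [log_factorial_eq, Sfun]
  apply Finset.sum_le_sum
  intro p hp
  simp only [Finset.mem_filter, Finset.mem_Iic] at hp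
  rw [inner_split hp.2 hp.1]
  have hlp : 0 ≤ Real.log p := Real.log_nonneg (by exact_mod_cast hp.2.one_lt.le)
  have : (0:ℝ) ≤ ((∑ i ∈ Finset.Ico 2 (n + 1), (n / p ^ i : ℕ) : ℕ) : ℝ) := Nat.cast_nonneg _
  nlinarith

lemma log_factorial_le (n : ℕ) :
    Real.log (Nat.factorial n) ≤ Sfun n + (2 * Kc) * n := by
  rw [log_factorial_eq, Sfun]
  have hsplit : ∑ p ∈ (Finset.Iic n).filter Nat.Prime,
      ((∑ i ∈ Finset.Ico 1 (n + 1), (n / p ^ i : ℕ) : ℕ) : ℝ) * Real.log p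
      = (∑ p ∈ (Finset.Iic n).filter Nat.Prime, ((n / p : ℕ) : ℝ) * Real.log p)
        + ∑ p ∈ (Finset.Iic n).filter Nat.Prime,
            ((∑ i ∈ Finset.Ico 2 (n + 1), (n / p ^ i : ℕ) : ℕ) : ℝ) * Real.log p := by
    rw [← Finset.sum_add_distrib]
    apply Finset.sum_congr rfl
    intro p hp
    simp only [Finset.mem_filter, Finset.mem_Iic] at hp
    rw [inner_split hp.2 hp.1]
    ring
  rw [hsplit]
  have herr : ∑ p ∈ (Finset.Iic n).filter Nat.Prime,
      ((∑ i ∈ Finset.Ico 2 (n + 1), (n / p ^ i : ℕ) : ℕ) : ℝ) * Real.log p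
      ≤ (2 * Kc) * n := by
    calc ∑ p ∈ (Finset.Iic n).filter Nat.Prime,
        ((∑ i ∈ Finset.Ico 2 (n + 1), (n / p ^ i : ℕ) : ℕ) : ℝ) * Real.log p
        ≤ ∑ p ∈ (Finset.Iic n).filter Nat.Prime, (2 * n) * (Real.log p / (p:ℝ)^2) := by
          apply Finset.sum_le_sum
          intro p hp
          simp only [Finset.mem_filter, Finset.mem_Iic] at hp
          have hlp : 0 ≤ Real.log p := Real.log_nonneg (by exact_mod_cast hp.2.one_lt.le)
          calc ((∑ i ∈ Finset.Ico 2 (n + 1), (n / p ^ i : ℕ) : ℕ) : ℝ) * Real.log p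
              ≤ (2 * n / (p:ℝ)^2) * Real.log p :=
                mul_le_mul_of_nonneg_right (tail_le hp.2 hp.1) hlp
            _ = (2 * n) * (Real.log p / (p:ℝ)^2) := by ring
      _ = (2 * n) * ∑ p ∈ (Finset.Iic n).filter Nat.Prime, (Real.log p / (p:ℝ)^2) := by
          rw [Finset.mul_sum]
      _ ≤ (2 * n) * Kc := by
          apply mul_le_mul_of_nonneg_left ?_ (by positivity)
          apply Summable.sum_le_tsum _ (fun m _ => logdiv_nonneg m) summable_logdiv
      _ = (2 * Kc) * n := by ring
  linarith

lemma Sfun_eq (n : ℕ) : Sfun n = ∑ k ∈ Finset.Icc 1 n, theta (n / k) := by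
  have h1 : Sfun n = ∑ p ∈ (Finset.Iic n).filter Nat.Prime,
      ∑ k ∈ Finset.Icc 1 (n / p), Real.log p := by
    apply Finset.sum_congr rfl
    intro p _
    rw [Finset.sum_const, Nat.card_Icc]
    simp [nsmul_eq_mul, mul_comm]
  rw [h1]
  rw [Finset.sum_comm' (t' := Finset.Icc 1 n)
    (s' := fun k => (Finset.Iic (n / k)).filter Nat.Prime) ?_]
  · apply Finset.sum_congr rfl
    intro k _
    rfl
  · intro p k
    simp only [Finset.mem_filter, Finset.mem_Iic, Finset.mem_Icc]
    constructor
    · rintro ⟨⟨hpn, hp⟩, hk1, hk2⟩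
      have hk0 : 0 < k := hk1
      have hpk : p * k ≤ n := by
        have := (Nat.le_div_iff_mul_le hp.pos).1 hk2
        linarith [this]
      refine ⟨⟨(Nat.le_div_iff_mul_le hk0).2 hpk, hp⟩, hk1, ?_⟩
      calc k ≤ p * k := Nat.le_mul_of_pos_left k hp.pos
        _ ≤ n := hpk
    · rintro ⟨⟨hpnk, hp⟩, hk1, hk2⟩
      have hk0 : 0 < k := hk1
      have hpk : p * k ≤ n := (Nat.le_div_iff_mul_le hk0).1 hpnk
      refine ⟨⟨?_, hp⟩, hk1, (Nat.le_div_iff_mul_le hp.pos).2 (by linarith [hpk])⟩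
      calc p ≤ p * k := Nat.le_mul_of_pos_right p hk0
        _ ≤ n := hpk

lemma pow_le_exp_mul_factorial (n : ℕ) (hn : 1 ≤ n) :
    (n : ℝ) ^ n ≤ Real.exp n * Nat.factorial n := by
  have hfac : (0:ℝ) < (Nat.factorial n : ℝ) := by exact_mod_cast Nat.factorial_pos n
  have h1 : (n:ℝ) ^ n / (Nat.factorial n : ℝ) ≤ Real.exp n := by
    have hterm : (n:ℝ) ^ n / (Nat.factorial n : ℝ)
        ≤ ∑ i ∈ Finset.range (n + 1), (n:ℝ) ^ i / (Nat.factorial i) := by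
      apply Finset.single_le_sum (f := fun i => (n:ℝ) ^ i / (Nat.factorial i : ℝ))
        (fun i _ => by positivity) (Finset.self_mem_range_succ n)
    exact hterm.trans (Real.sum_le_exp_of_nonneg (Nat.cast_nonneg n) (n + 1))
  calc (n : ℝ) ^ n = ((n:ℝ) ^ n / (Nat.factorial n : ℝ)) * Nat.factorial n := by
        field_simp
    _ ≤ Real.exp n * Nat.factorial n := by
        apply mul_le_mul_of_nonneg_right h1 hfac.le

lemma log_factorial_lower (n : ℕ) (hn : 1 ≤ n) :
    (n:ℝ) * Real.log n - n ≤ Real.log (Nat.factorial n) := by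
  have hn0 : (0:ℝ) < n := by exact_mod_cast hn
  have hfac : (0:ℝ) < (Nat.factorial n : ℝ) := by exact_mod_cast Nat.factorial_pos n
  have h := Real.log_le_log (by positivity) (pow_le_exp_mul_factorial n hn)
  rw [Real.log_pow, Real.log_mul (Real.exp_ne_zero _) hfac.ne', Real.log_exp] at h
  linarith

lemma log_factorial_upper (n : ℕ) :
    Real.log (Nat.factorial n) ≤ (n:ℝ) * Real.log n := by
  rcases Nat.eq_zero_or_pos n with h | h
  · simp [h]
  have h1 : ((Nat.factorial n : ℕ) : ℝ) ≤ ((n ^ n : ℕ) : ℝ) := by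
    exact_mod_cast Nat.factorial_le_pow n
  have h2 := Real.log_le_log (by exact_mod_cast Nat.factorial_pos n) h1
  rwa [Nat.cast_pow, Real.log_pow] at h2

/-- harmonic sums over `Icc 1 m` -/
lemma sum_inv_le (m : ℕ) : ∑ k ∈ Finset.Icc 1 m, ((k:ℝ))⁻¹ ≤ 1 + Real.log m := by
  have h := harmonic_le_one_add_log m
  have he : ((harmonic m : ℚ) : ℝ) = ∑ k ∈ Finset.Icc 1 m, ((k:ℝ))⁻¹ := by
    rw [harmonic_eq_sum_Icc]
    push_cast
    rfl
  linarith [he ▸ h]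

lemma sum_inv_ge (m : ℕ) : Real.log (m + 1) ≤ ∑ k ∈ Finset.Icc 1 m, ((k:ℝ))⁻¹ := by
  have h := log_add_one_le_harmonic m
  have he : ((harmonic m : ℚ) : ℝ) = ∑ k ∈ Finset.Icc 1 m, ((k:ℝ))⁻¹ := by
    rw [harmonic_eq_sum_Icc]
    push_cast
    rfl
  rw [← he]
  exact_mod_cast h

lemma nat_div_real_lt (n k : ℕ) (hk : 0 < k) : (n:ℝ) / k < ((n / k : ℕ) : ℝ) + 1 := by
  have hk0 : (0:ℝ) < k := by exact_mod_cast hk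
  rw [div_lt_iff₀ hk0]
  have h1 : n < k * (n / k + 1) := by
    calc n = k * (n / k) + n % k := (Nat.div_add_mod n k).symm
      _ < k * (n / k) + k := by
          have := Nat.mod_lt n hk
          omega
      _ = k * (n / k + 1) := by ring
  calc (n:ℝ) < (k * (n / k + 1) : ℕ) := by exact_mod_cast h1
    _ = (((n / k : ℕ) : ℝ) + 1) * k := by push_cast; ring

lemma G_upper (n m : ℕ) (hm : m ≤ n) :
    ∑ k ∈ Finset.Icc 1 m, ((n / k : ℕ) : ℝ) ≤ n * (1 + Real.log n) := by
  calc ∑ k ∈ Finset.Icc 1 m, ((n / k : ℕ) : ℝ)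
      ≤ ∑ k ∈ Finset.Icc 1 m, (n:ℝ) * ((k:ℝ))⁻¹ := by
        apply Finset.sum_le_sum
        intro k _
        rw [mul_comm, ← div_eq_inv_mul]
        exact Nat.cast_div_le
    _ ≤ ∑ k ∈ Finset.Icc 1 n, (n:ℝ) * ((k:ℝ))⁻¹ := by
        apply Finset.sum_le_sum_of_subset_of_nonneg
        · exact Finset.Icc_subset_Icc_right hm
        · intro k hk _
          simp only [Finset.mem_Icc] at hk
          positivity
    _ = (n:ℝ) * ∑ k ∈ Finset.Icc 1 n, ((k:ℝ))⁻¹ := by rw [Finset.mul_sum]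
    _ ≤ n * (1 + Real.log n) := by
        apply mul_le_mul_of_nonneg_left (sum_inv_le n) (Nat.cast_nonneg n)

lemma G_lower (n M : ℕ) (hM : 1 ≤ M) (hn : 1 ≤ n) :
    (n:ℝ) * Real.log n - n * (Real.log M + 1) ≤ ∑ k ∈ Finset.Icc 1 (n / M), ((n / k : ℕ) : ℝ) := by
  have hn0 : (0:ℝ) < n := by exact_mod_cast hn
  have hM0 : (0:ℝ) < M := by exact_mod_cast hM
  have step1 : ∑ k ∈ Finset.Icc 1 (n / M), ((n:ℝ) * ((k:ℝ))⁻¹ - 1)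
      ≤ ∑ k ∈ Finset.Icc 1 (n / M), ((n / k : ℕ) : ℝ) := by
    apply Finset.sum_le_sum
    intro k hk
    simp only [Finset.mem_Icc] at hk
    have := nat_div_real_lt n k hk.1
    rw [div_eq_mul_inv] at this
    linarith
  have step2 : ∑ k ∈ Finset.Icc 1 (n / M), ((n:ℝ) * ((k:ℝ))⁻¹ - 1)
      = (n:ℝ) * (∑ k ∈ Finset.Icc 1 (n / M), ((k:ℝ))⁻¹) - (n / M : ℕ) := by
    rw [Finset.sum_sub_distrib, Finset.sum_const, ← Finset.mul_sum]
    simp [Nat.card_Icc]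
  have step3 : Real.log n - Real.log M ≤ Real.log ((n / M : ℕ) + 1) := by
    rw [← Real.log_div hn0.ne' hM0.ne']
    apply Real.log_le_log (by positivity)
    exact (nat_div_real_lt n M (by omega)).le
  have step4 : (n:ℝ) * (Real.log n - Real.log M)
      ≤ (n:ℝ) * ∑ k ∈ Finset.Icc 1 (n / M), ((k:ℝ))⁻¹ := by
    apply mul_le_mul_of_nonneg_left ?_ (Nat.cast_nonneg n)
    calc Real.log n - Real.log M ≤ Real.log ((n / M : ℕ) + 1) := step3
      _ ≤ ∑ k ∈ Finset.Icc 1 (n / M), ((k:ℝ))⁻¹ := by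
          have := sum_inv_ge (n / M)
          push_cast at this ⊢
          linarith
  have hdivn : ((n / M : ℕ) : ℝ) ≤ n := by exact_mod_cast Nat.div_le_self n M
  nlinarith [step1, step2, step4]

lemma F_tendsto (c : ℝ) (hc : 0 ≤ c)
    (hθ : Tendsto (fun n : ℕ => theta n / n) atTop (nhds c)) :
    Tendsto (fun n : ℕ => (∑ k ∈ Finset.Icc 1 n, theta (n / k)) / ((n:ℝ) * Real.log n))
      atTop (nhds c) := by
  rw [Metric.tendsto_atTop]
  intro ε hε
  have hε4 : 0 < ε/4 := by linarith
  rw [Metric.tendsto_atTop] at hθ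
  obtain ⟨M₀, hM₀⟩ := hθ (ε/4) hε4
  set M := max M₀ 2 with hMdef
  have hM2 : 2 ≤ M := le_max_right _ _
  have hM1 : 1 ≤ M := by omega
  have hMbound : ∀ m : ℕ, M ≤ m → |theta m - c * m| ≤ (ε/4) * m := by
    intro m hm
    have hm2 : 2 ≤ m := le_trans hM2 hm
    have hm0 : (0:ℝ) < m := by exact_mod_cast (by omega : 0 < m)
    have hd := hM₀ m (le_trans (le_max_left _ _) hm)
    rw [Real.dist_eq] at hd
    have h2 : |theta m / m - c| ≤ ε/4 := hd.le
    have h3 : theta m / m - c = (theta m - c * m) / m := by field_simp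
    rw [h3, abs_div, abs_of_pos hm0, div_le_iff₀ hm0] at h2
    exact h2
  set K₀ : ℝ := c * (Real.log M + 1) + theta M with hK₀
  have hlogM : (0:ℝ) ≤ Real.log M := Real.log_natCast_nonneg M
  have hK₀0 : 0 ≤ K₀ := by
    have h1 := theta_nonneg M
    nlinarith
  have hlog : Tendsto (fun n : ℕ => Real.log n) atTop atTop :=
    Real.tendsto_log_atTop.comp (tendsto_natCast_atTop_atTop (R := ℝ))
  obtain ⟨N₁, hN₁⟩ := eventually_atTop.1 (hlog.eventually_gt_atTop (max 1 ((K₀ + 1) * (4/ε))))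
  refine ⟨max N₁ (M * M + 1), fun n hn => ?_⟩
  have hnN₁ : N₁ ≤ n := le_trans (le_max_left _ _) hn
  have hnM : M * M + 1 ≤ n := le_trans (le_max_right _ _) hn
  have hMM : 4 ≤ M * M := Nat.mul_le_mul hM2 hM2
  have hn2 : 2 ≤ n := by omega
  have hn0 : (0:ℝ) < n := by exact_mod_cast (by omega : 0 < n)
  have hlogn1 : 1 < Real.log n := lt_of_le_of_lt (le_max_left _ _) (hN₁ n hnN₁)
  have hlogn2 : (K₀ + 1) * (4/ε) < Real.log n := lt_of_le_of_lt (le_max_right _ _) (hN₁ n hnN₁)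
  have hnlogn : (0:ℝ) < (n:ℝ) * Real.log n := mul_pos hn0 (by linarith)
  set q := n / M with hq
  have hqn : q ≤ n := Nat.div_le_self n M
  have hsplit : ∑ k ∈ Finset.Icc 1 n, theta (n / k)
      = (∑ k ∈ Finset.Icc 1 q, theta (n / k)) + ∑ k ∈ Finset.Ioc q n, theta (n / k) := by
    have e1 : Finset.Icc 1 n = Finset.Ioc 0 n := by
      ext x; simp [Finset.mem_Icc, Finset.mem_Ioc]; omega
    have e2 : Finset.Icc 1 q = Finset.Ioc 0 q := by
      ext x; simp [Finset.mem_Icc, Finset.mem_Ioc]; omega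
    rw [e1, e2]
    exact (Finset.sum_Ioc_consecutive _ (Nat.zero_le q) hqn).symm
  set G : ℝ := ∑ k ∈ Finset.Icc 1 q, ((n / k : ℕ) : ℝ) with hG
  set A : ℝ := ∑ k ∈ Finset.Icc 1 q, theta (n / k) with hA
  set B : ℝ := ∑ k ∈ Finset.Ioc q n, theta (n / k) with hB
  have hAbound : |A - c * G| ≤ (ε/4) * G := by
    rw [hA, hG, Finset.mul_sum, ← Finset.sum_sub_distrib, Finset.mul_sum]
    refine le_trans (Finset.abs_sum_le_sum_abs _ _) (Finset.sum_le_sum ?_)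
    intro k hk
    simp only [Finset.mem_Icc] at hk
    have hMnk : M ≤ n / k := by
      rw [Nat.le_div_iff_mul_le hk.1]
      calc M * k ≤ M * q := Nat.mul_le_mul_left M hk.2
        _ = q * M := by ring
        _ ≤ n := Nat.div_mul_le_self n M
    exact hMbound (n / k) hMnk
  have hBup : B ≤ (n:ℝ) * theta M := by
    have hstep : ∀ k ∈ Finset.Ioc q n, theta (n / k) ≤ theta M := by
      intro k hk
      simp only [Finset.mem_Ioc] at hk
      apply theta_mono
      have hk0 : 0 < k := lt_of_le_of_lt (Nat.zero_le q) hk.1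
      have hdm : M * q + n % M = n := by rw [hq]; exact Nat.div_add_mod n M
      have hmod : n % M < M := Nat.mod_lt n (by omega)
      have hlt : n < (M + 1) * (q + 1) := by nlinarith [hdm, hmod]
      have : n / k < M + 1 := by
        rw [Nat.div_lt_iff_lt_mul hk0]
        calc n < (M + 1) * (q + 1) := hlt
          _ ≤ (M + 1) * k := Nat.mul_le_mul_left _ hk.1
      omega
    calc B ≤ ∑ _k ∈ Finset.Ioc q n, theta M := Finset.sum_le_sum hstep
      _ = ((n - q : ℕ) : ℝ) * theta M := by
          rw [Finset.sum_const, Nat.card_Ioc]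
          simp [nsmul_eq_mul]
      _ ≤ (n:ℝ) * theta M := by
          apply mul_le_mul_of_nonneg_right ?_ (theta_nonneg M)
          exact_mod_cast Nat.sub_le n q
  have hB0 : 0 ≤ B := Finset.sum_nonneg fun k _ => theta_nonneg _
  have hGup : G ≤ n * (1 + Real.log n) := G_upper n q hqn
  have hGlow : (n:ℝ) * Real.log n - n * (Real.log M + 1) ≤ G := G_lower n M hM1 (by omega)
  have hG0 : 0 ≤ G := Finset.sum_nonneg fun k _ => Nat.cast_nonneg _
  have key : |(A + B) - c * ((n:ℝ) * Real.log n)|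
      ≤ (ε/4) * ((n:ℝ) * (1 + Real.log n)) + K₀ * n := by
    have h1 : |A - c * G| ≤ (ε/4) * ((n:ℝ) * (1 + Real.log n)) := by
      refine le_trans hAbound ?_
      apply mul_le_mul_of_nonneg_left hGup (by linarith)
    have h2 : |c * G - c * ((n:ℝ) * Real.log n)| ≤ c * ((n:ℝ) * (Real.log M + 1)) := by
      rw [← mul_sub, abs_mul, abs_of_nonneg hc]
      apply mul_le_mul_of_nonneg_left ?_ hc
      rw [abs_le]
      constructor
      · linarith
      · nlinarith
    calc |(A + B) - c * ((n:ℝ) * Real.log n)|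
        = |(A - c * G) + (c * G - c * ((n:ℝ) * Real.log n)) + B| := by ring_nf
      _ ≤ |(A - c * G) + (c * G - c * ((n:ℝ) * Real.log n))| + |B| := abs_add_le _ _
      _ ≤ |A - c * G| + |c * G - c * ((n:ℝ) * Real.log n)| + |B| := by
          have := abs_add_le (A - c * G) (c * G - c * ((n:ℝ) * Real.log n))
          linarith
      _ ≤ (ε/4) * ((n:ℝ) * (1 + Real.log n)) + c * ((n:ℝ) * (Real.log M + 1)) + (n:ℝ) * theta M := by
          rw [abs_of_nonneg hB0]
          linarith
      _ = (ε/4) * ((n:ℝ) * (1 + Real.log n)) + K₀ * n := by rw [hK₀]; ring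
  rw [Real.dist_eq, hsplit]
  have heq : (A + B) / ((n:ℝ) * Real.log n) - c
      = ((A + B) - c * ((n:ℝ) * Real.log n)) / ((n:ℝ) * Real.log n) := by
    field_simp
  rw [heq, abs_div, abs_of_pos hnlogn, div_lt_iff₀ hnlogn]
  refine lt_of_le_of_lt key ?_
  have hεL : 4 * K₀ + 4 < ε * Real.log n := by
    have h := mul_lt_mul_of_pos_left hlogn2 hε
    have he : ε * ((K₀ + 1) * (4/ε)) = 4 * K₀ + 4 := by field_simp
    linarith [he ▸ h]
  have step1 : (ε/4) * (1 + Real.log n) + K₀ < ε * Real.log n := by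
    nlinarith [mul_pos hε (sub_pos.2 hlogn1)]
  calc (ε/4) * ((n:ℝ) * (1 + Real.log n)) + K₀ * n
      = ((ε/4) * (1 + Real.log n) + K₀) * n := by ring
    _ < (ε * Real.log n) * n := by exact mul_lt_mul_of_pos_right step1 hn0
    _ = ε * ((n:ℝ) * Real.log n) := by ring

theorem chebyshev_pnt_limit (c : ℝ)
    (h : Tendsto (fun x : ℝ => primePi x / (x / Real.log x)) atTop (nhds c)) :
    c = 1 := by
  have hπ := pi_tendsto_nat c h
  have hc : 0 ≤ c := by
    apply ge_of_tendsto hπ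
    filter_upwards [eventually_ge_atTop 2] with n hn
    have hn0 : (0:ℝ) < n := by exact_mod_cast (by omega : 0 < n)
    have h1 := pin_nonneg n
    have h2 := Real.log_natCast_nonneg n
    positivity
  have hθ := theta_tendsto c hc hπ
  have hFc := F_tendsto c hc hθ
  have hKc0 : 0 ≤ Kc := tsum_nonneg logdiv_nonneg
  have hlogtop : Tendsto (fun n : ℕ => Real.log n) atTop atTop :=
    Real.tendsto_log_atTop.comp (tendsto_natCast_atTop_atTop (R := ℝ))
  have hF1 : Tendsto (fun n : ℕ => (∑ k ∈ Finset.Icc 1 n, theta (n / k)) / ((n:ℝ) * Real.log n))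
      atTop (nhds 1) := by
    apply tendsto_of_tendsto_of_tendsto_of_le_of_le'
      (g := fun n : ℕ => 1 - (1 + 2 * Kc) / Real.log n) (h := fun _ : ℕ => (1:ℝ))
    · have h0 : Tendsto (fun n : ℕ => (1 + 2 * Kc) / Real.log n) atTop (nhds 0) :=
        tendsto_const_nhds.div_atTop hlogtop
      have := tendsto_const_nhds (x := (1:ℝ)) (f := atTop (α := ℕ))
      simpa using this.sub h0
    · exact tendsto_const_nhds
    · filter_upwards [eventually_ge_atTop 3,
        hlogtop.eventually_gt_atTop 1] with n hn3 hlogn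
      have hn0 : (0:ℝ) < n := by exact_mod_cast (by omega : 0 < n)
      have hnlogn : (0:ℝ) < (n:ℝ) * Real.log n := mul_pos hn0 (by linarith)
      rw [← Sfun_eq]
      have h1 := log_factorial_le n
      have h2 := log_factorial_lower n (by omega)
      rw [le_div_iff₀ hnlogn]
      have hexp : (1 - (1 + 2 * Kc) / Real.log n) * ((n:ℝ) * Real.log n)
          = (n:ℝ) * Real.log n - (1 + 2 * Kc) * n := by
        field_simp
      rw [hexp]
      linarith
    · filter_upwards [eventually_ge_atTop 3,
        hlogtop.eventually_gt_atTop 1] with n hn3 hlogn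
      have hn0 : (0:ℝ) < n := by exact_mod_cast (by omega : 0 < n)
      have hnlogn : (0:ℝ) < (n:ℝ) * Real.log n := mul_pos hn0 (by linarith)
      rw [← Sfun_eq, div_le_one hnlogn]
      have h1 := Sfun_le_log_factorial n
      have h2 := log_factorial_upper n
      linarith
  exact tendsto_nhds_unique hFc hF1
end

section
/- There exist positive constants c₁, c₂ with c₁ < 1 < c₂ and an x₀ such that for all x ≥ x₀, c₁·x/log x ≤ π(x) ≤ c₂·x/log x. -/
open Real

/-- number of primes ≤ m, as a natural number -/
def chebP (m : ℕ) : ℕ := ((Finset.Iic m).filter Nat.Prime).card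

lemma primePi_eq (x : ℝ) : primePi x = (chebP ⌊x⌋₊ : ℝ) := rfl

lemma cheb_lemA {n : ℕ} (hn : 1 ≤ n) : 4 ^ n ≤ (2 * n) ^ (chebP (2 * n) + 2) := by
  have hc : 0 < (2 * n).choose n := Nat.choose_pos (by omega)
  have key : (2 * n).choose n ≤ (2 * n) ^ chebP (2 * n) := by
    conv_lhs => rw [← Nat.factorization_prod_pow_eq_self hc.ne']
    rw [Finsupp.prod]
    calc ∏ p ∈ ((2 * n).choose n).factorization.support,
          p ^ ((2 * n).choose n).factorization p
        ≤ (2 * n) ^ ((2 * n).choose n).factorization.support.card := by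
          apply Finset.prod_le_pow_card
          intro p _
          exact Nat.pow_factorization_choose_le (by omega)
      _ ≤ (2 * n) ^ chebP (2 * n) := by
          apply Nat.pow_le_pow_right (by omega)
          apply Finset.card_le_card
          intro p hp
          have hp' := hp
          rw [Nat.support_factorization] at hp'
          have hprime : p.Prime := Nat.prime_of_mem_primeFactors hp'
          have h1 : 1 ≤ ((2 * n).choose n).factorization p :=
            Nat.one_le_iff_ne_zero.mpr (Finsupp.mem_support_iff.mp hp)
          have hple : p ≤ 2 * n := by
            calc p = p ^ 1 := (pow_one p).symm
              _ ≤ p ^ ((2 * n).choose n).factorization p :=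
                  Nat.pow_le_pow_right hprime.one_lt.le h1
              _ ≤ 2 * n := Nat.pow_factorization_choose_le (by omega)
          simp [chebP, Finset.mem_filter, hprime, hple]
  calc 4 ^ n ≤ (2 * n + 1) * (2 * n).choose n :=
        Nat.four_pow_le_two_mul_add_one_mul_central_binom n
    _ ≤ (2 * n) ^ 2 * (2 * n) ^ chebP (2 * n) := by
        apply Nat.mul_le_mul _ key; nlinarith
    _ = (2 * n) ^ (chebP (2 * n) + 2) := by ring

lemma cheb_lemB (m s : ℕ) :
    (s + 1) ^ (((Finset.Iic m).filter fun p => Nat.Prime p ∧ s < p).card) ≤ 4 ^ m ∧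
    chebP m ≤ (s + 1) + ((Finset.Iic m).filter fun p => Nat.Prime p ∧ s < p).card := by
  set T := (Finset.Iic m).filter fun p => Nat.Prime p ∧ s < p with hT
  constructor
  · calc (s + 1) ^ T.card ≤ ∏ p ∈ T, p := by
          apply Finset.pow_card_le_prod
          intro p hp
          simp only [hT, Finset.mem_filter] at hp
          omega
      _ ≤ ∏ p ∈ (Finset.range (m + 1)).filter Nat.Prime, p := by
          apply Finset.prod_le_prod_of_subset_of_one_le'
          · intro p hp
            simp only [hT, Finset.mem_filter, Finset.mem_Iic] at hp
            simp only [Finset.mem_filter, Finset.mem_range]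
            exact ⟨by omega, hp.2.1⟩
          · intro p hp _
            simp only [Finset.mem_filter] at hp
            exact hp.2.one_lt.le
      _ ≤ 4 ^ m := primorial_le_4_pow m
  · calc chebP m ≤ ((Finset.Iic s).filter Nat.Prime).card + T.card := by
          refine le_trans (Finset.card_le_card ?_) (Finset.card_union_le _ _)
          intro p hp
          simp only [Finset.mem_filter, Finset.mem_Iic] at hp
          simp only [hT, Finset.mem_union, Finset.mem_filter, Finset.mem_Iic]
          rcases le_or_gt p s with h | h
          · exact Or.inl ⟨h, hp.2⟩
          · exact Or.inr ⟨hp.1, hp.2, h⟩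
      _ ≤ (s + 1) + T.card := by
          apply Nat.add_le_add_right
          calc ((Finset.Iic s).filter Nat.Prime).card ≤ (Finset.Iic s).card :=
                Finset.card_filter_le _ _
            _ = s + 1 := Nat.card_Iic s

lemma cheb_log_le_two_sqrt {x : ℝ} (hx : 1 ≤ x) : Real.log x ≤ 2 * Real.sqrt x := by
  have h0 : (0:ℝ) < x := by linarith
  have hs : 0 < Real.sqrt x := Real.sqrt_pos.mpr h0
  have h1 : Real.log (Real.sqrt x) = Real.log x / 2 := Real.log_sqrt h0.le
  have h2 : Real.log (Real.sqrt x) ≤ Real.sqrt x - 1 := Real.log_le_sub_one_of_pos hs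
  nlinarith

set_option maxHeartbeats 1000000 in
theorem chebyshev_estimate :
    ∃ c₁ c₂ x₀ : ℝ, 0 < c₁ ∧ c₁ < 1 ∧ 1 < c₂ ∧
      ∀ x : ℝ, x₀ ≤ x →
        c₁ * x / Real.log x ≤ primePi x ∧ primePi x ≤ c₂ * x / Real.log x := by
  refine ⟨1/2, 10, 10^6, by norm_num, by norm_num, by norm_num, fun x hx => ?_⟩
  have hx6 : (1000000:ℝ) ≤ x := by norm_num at hx; linarith
  have hx1 : (1:ℝ) ≤ x := by linarith
  have hx0 : (0:ℝ) < x := by linarith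
  have hlog : 0 < Real.log x := Real.log_pos (by linarith)
  -- log 4 bounds
  have hl4 : Real.log 4 = 2 * Real.log 2 := by
    rw [show (4:ℝ) = 2^2 by norm_num, Real.log_pow]; push_cast; ring
  have hl4lb : (1.38:ℝ) ≤ Real.log 4 := by
    have h := Real.log_two_gt_d9; rw [hl4]; nlinarith
  have hl4ub : Real.log 4 ≤ (1.39:ℝ) := by
    have h := Real.log_two_lt_d9; rw [hl4]; nlinarith
  -- sqrt facts
  have hmul : Real.sqrt x * Real.sqrt x = x := Real.mul_self_sqrt hx0.le
  have h1000 : (1000:ℝ) ≤ Real.sqrt x := by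
    rw [show (1000:ℝ) = Real.sqrt (1000000) by
      rw [show (1000000:ℝ) = 1000^2 by norm_num, Real.sqrt_sq]; norm_num]
    exact Real.sqrt_le_sqrt hx6
  have hsqpos : 0 < Real.sqrt x := by linarith
  have hlog2s : Real.log x ≤ 2 * Real.sqrt x := cheb_log_le_two_sqrt hx1
  have hlog500 : Real.log x ≤ x / 500 := by nlinarith
  constructor
  · -- lower bound
    set n := ⌊x / 2⌋₊ with hn
    have hn1 : 1 ≤ n := by
      apply Nat.le_floor; push_cast; linarith
    have h2nle : (2 * (n:ℝ)) ≤ x := by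
      have := Nat.floor_le (show (0:ℝ) ≤ x / 2 by linarith)
      rw [← hn] at this; linarith
    have hnge : x / 2 - 1 ≤ (n:ℝ) := by
      have := Nat.lt_floor_add_one (x / 2)
      rw [← hn] at this; linarith
    have hA := cheb_lemA hn1
    have hAr : (4:ℝ) ^ n ≤ (2 * (n:ℝ)) ^ (chebP (2 * n) + 2) := by
      exact_mod_cast hA
    have hlogA : (n:ℝ) * Real.log 4 ≤ ((chebP (2 * n) : ℝ) + 2) * Real.log x := by
      have h1 : Real.log ((4:ℝ) ^ n) ≤ Real.log ((2 * (n:ℝ)) ^ (chebP (2 * n) + 2)) :=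
        Real.log_le_log (by positivity) hAr
      rw [Real.log_pow, Real.log_pow] at h1
      have h2 : Real.log (2 * (n:ℝ)) ≤ Real.log x := by
        apply Real.log_le_log (by positivity) h2nle
      have h3 : (0:ℝ) ≤ (chebP (2 * n) : ℝ) + 2 := by positivity
      calc (n:ℝ) * Real.log 4 ≤ ((chebP (2 * n) + 2 : ℕ):ℝ) * Real.log (2 * (n:ℝ)) := h1
        _ ≤ ((chebP (2 * n) : ℝ) + 2) * Real.log x := by push_cast; nlinarith
    have hPle : (chebP (2 * n) : ℝ) ≤ primePi x := by
      rw [primePi_eq]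
      have hsub : (2 * n : ℕ) ≤ ⌊x⌋₊ := by
        apply Nat.le_floor; push_cast; linarith
      exact_mod_cast Nat.cast_le.mpr (Finset.card_le_card
        (Finset.filter_subset_filter _ (Finset.Iic_subset_Iic.mpr hsub)))
    rw [div_le_iff₀ hlog]
    have key : (1/2 : ℝ) * x ≤ (chebP (2 * n) : ℝ) * Real.log x := by nlinarith
    calc (1/2 : ℝ) * x ≤ (chebP (2 * n) : ℝ) * Real.log x := key
      _ ≤ primePi x * Real.log x := by nlinarith
  · -- upper bound
    set m := ⌊x⌋₊ with hm
    set s := ⌊Real.sqrt x⌋₊ with hs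
    obtain ⟨hB1, hB2⟩ := cheb_lemB m s
    set t := ((Finset.Iic m).filter fun p => Nat.Prime p ∧ s < p).card with ht
    have hmle : (m:ℝ) ≤ x := Nat.floor_le hx0.le
    have hsle : (s:ℝ) ≤ Real.sqrt x := Nat.floor_le hsqpos.le
    have hslt : Real.sqrt x < (s:ℝ) + 1 := Nat.lt_floor_add_one _
    have hB1r : ((s:ℝ) + 1) ^ t ≤ (4:ℝ) ^ m := by exact_mod_cast hB1
    have hlogB : (t:ℝ) * (Real.log x / 2) ≤ x * Real.log 4 := by
      have h1 : Real.log (((s:ℝ) + 1) ^ t) ≤ Real.log ((4:ℝ) ^ m) :=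
        Real.log_le_log (by positivity) hB1r
      rw [Real.log_pow, Real.log_pow] at h1
      have h2 : Real.log (Real.sqrt x) ≤ Real.log ((s:ℝ) + 1) :=
        Real.log_le_log hsqpos hslt.le
      rw [Real.log_sqrt hx0.le] at h2
      have h3 : (m:ℝ) * Real.log 4 ≤ x * Real.log 4 := by nlinarith
      calc (t:ℝ) * (Real.log x / 2) ≤ (t:ℝ) * Real.log ((s:ℝ) + 1) := by
            apply mul_le_mul_of_nonneg_left h2 (by positivity)
        _ ≤ (m:ℝ) * Real.log 4 := h1
        _ ≤ x * Real.log 4 := h3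
    have hPile : primePi x ≤ (s:ℝ) + 1 + (t:ℝ) := by
      rw [primePi_eq, ← hm]
      exact_mod_cast Nat.cast_le.mpr hB2
    clear_value t s m
    rw [le_div_iff₀ hlog]
    have hsx : Real.sqrt x ≤ x := by nlinarith
    have htlog : (t:ℝ) * Real.log x ≤ 2.78 * x := by
      have h4 : x * Real.log 4 ≤ x * 1.39 := mul_le_mul_of_nonneg_left hl4ub hx0.le
      linarith
    calc primePi x * Real.log x ≤ ((s:ℝ) + 1 + (t:ℝ)) * Real.log x :=
          mul_le_mul_of_nonneg_right hPile hlog.le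
      _ = ((s:ℝ) + 1) * Real.log x + (t:ℝ) * Real.log x := by ring
      _ ≤ (Real.sqrt x + 1) * (2 * Real.sqrt x) + 2.78 * x := by
          have h0t : (0:ℝ) ≤ (s:ℝ) + 1 := by positivity
          have : ((s:ℝ) + 1) * Real.log x ≤ (Real.sqrt x + 1) * (2 * Real.sqrt x) := by
            nlinarith
          linarith
      _ ≤ 10 * x := by nlinarith
end

section
/- For every n ≥ 1, the supremum of |2^{1−n} T_n(x)| over x ∈ [−1,1] equals 2^{1−n}, and for every monic polynomial p of degree n, sup_{x ∈ [−1,1]} |p(x)| ≥ 2^{1−n}. -/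
open Polynomial Polynomial.Chebyshev Real

lemma T_deg_aux : ∀ k : ℕ, (T ℝ (k:ℤ)).natDegree ≤ k ∧ (T ℝ ((k:ℤ)+1)).natDegree ≤ k+1 ∧
    (T ℝ ((k:ℤ)+1)).coeff (k+1) = 2^k := by
  intro k
  induction k with
  | zero => norm_num
  | succ k ih =>
    obtain ⟨h0, h1, hc⟩ := ih
    have hT2 : T ℝ (((k+1:ℕ):ℤ)+1) = 2 * X * T ℝ ((k:ℤ)+1) - T ℝ (k:ℤ) := by
      rw [show (((k+1:ℕ):ℤ)+1) = (k:ℤ)+2 by push_cast; ring, T_add_two]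
    have h2X : (2 * X * T ℝ ((k:ℤ)+1) : ℝ[X]) = X * T ℝ ((k:ℤ)+1) + X * T ℝ ((k:ℤ)+1) := by ring
    have hcast : ((k+1:ℕ):ℤ) = (k:ℤ)+1 := by push_cast; ring
    refine ⟨by rw [hcast]; exact h1, ?_, ?_⟩
    · rw [hT2]
      refine (natDegree_sub_le _ _).trans (max_le ?_ (h0.trans (by omega)))
      rw [h2X]
      refine (natDegree_add_le _ _).trans (max_le ?_ ?_) <;>
        exact (natDegree_mul_le).trans (by simpa using by omega)
    · rw [hT2, coeff_sub, h2X, coeff_add]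
      rw [show k+1+1 = (k+1)+1 from rfl, coeff_X_mul, hc,
        coeff_eq_zero_of_natDegree_lt (by omega : (T ℝ (k:ℤ)).natDegree < k+1+1)]
      ring

lemma T_coeff' (n : ℕ) (hn : 1 ≤ n) : (T ℝ (n:ℤ)).coeff n = 2^(n-1) := by
  obtain ⟨k, rfl⟩ := Nat.exists_eq_add_of_le hn
  have := (T_deg_aux k).2.2
  rw [show ((1+k:ℕ):ℤ) = (k:ℤ)+1 by push_cast; ring, show 1+k = k+1 by ring, this,
    show k+1-1 = k by omega]

lemma T_natDegree' (n : ℕ) (hn : 1 ≤ n) : (T ℝ (n:ℤ)).natDegree = n := by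
  refine le_antisymm (T_deg_aux n).1 (le_natDegree_of_ne_zero ?_)
  rw [T_coeff' n hn]
  positivity

lemma abs_T_le (m : ℤ) {x : ℝ} (hx : x ∈ Set.Icc (-1:ℝ) 1) : |(T ℝ m).eval x| ≤ 1 := by
  rw [← Real.cos_arccos hx.1 hx.2, T_real_cos]
  exact abs_cos_le_one _

lemma exists_root_Ioo (f : Polynomial ℝ) {a b : ℝ} (hab : a < b)
    (h : f.eval a * f.eval b < 0) : ∃ y ∈ Set.Ioo a b, f.eval y = 0 := by
  have hc : ContinuousOn (fun y => f.eval y) (Set.Icc a b) :=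
    (f.continuous_aeval).continuousOn
  rcases lt_or_ge (f.eval a) 0 with ha | ha
  · have hb : 0 < f.eval b := by nlinarith
    obtain ⟨y, hy, hy0⟩ := intermediate_value_Ioo hab.le hc (by exact ⟨ha, hb⟩ : (0:ℝ) ∈ _)
    exact ⟨y, hy, hy0⟩
  · have ha' : 0 < f.eval a := by
      rcases ha.lt_or_eq with h' | h'
      · exact h'
      · rw [← h', zero_mul] at h; linarith
    have hb : f.eval b < 0 := by nlinarith
    obtain ⟨y, hy, hy0⟩ := intermediate_value_Ioo' hab.le hc (by exact ⟨hb, ha'⟩ : (0:ℝ) ∈ _)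
    exact ⟨y, hy, hy0⟩

theorem chebyshev_minimal_deviation (n : ℕ) (hn : 1 ≤ n) :
    (⨆ x : Set.Icc (-1 : ℝ) 1, |(2 : ℝ) ^ (1 - (n : ℤ)) * (T ℝ n).eval (x : ℝ)|) =
      (2 : ℝ) ^ (1 - (n : ℤ)) ∧
    ∀ p : Polynomial ℝ, p.Monic → p.natDegree = n →
      (2 : ℝ) ^ (1 - (n : ℤ)) ≤ ⨆ x : Set.Icc (-1 : ℝ) 1, |p.eval (x : ℝ)| := by
  haveI : Nonempty (Set.Icc (-1:ℝ) 1) := ⟨⟨1, by norm_num⟩⟩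
  set ε : ℝ := (2:ℝ) ^ (1 - (n:ℤ)) with hεdef
  have hε : 0 < ε := by positivity
  have hnR : (0:ℝ) < n := by exact_mod_cast hn
  have hb : ∀ x : Set.Icc (-1:ℝ) 1, |ε * (T ℝ n).eval (x:ℝ)| ≤ ε := by
    intro x
    rw [abs_mul, abs_of_pos hε]
    calc ε * |(T ℝ n).eval (x:ℝ)| ≤ ε * 1 := by
          exact mul_le_mul_of_nonneg_left (abs_T_le n x.2) hε.le
      _ = ε := mul_one ε
  have hT1 : (T ℝ n).eval 1 = 1 := by
    have := T_real_cos 0 n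
    simpa using this
  constructor
  · refine le_antisymm (ciSup_le hb) ?_
    have hle := le_ciSup (f := fun x : Set.Icc (-1:ℝ) 1 => |ε * (T ℝ n).eval (x:ℝ)|)
      ⟨ε, by rintro _ ⟨x, rfl⟩; exact hb x⟩ (⟨1, by norm_num⟩ : Set.Icc (-1:ℝ) 1)
    simpa [hT1, abs_of_pos hε] using hle
  · intro p hp hdeg
    by_contra hcon
    push_neg at hcon
    have hbdd : BddAbove (Set.range fun x : Set.Icc (-1:ℝ) 1 => |p.eval (x:ℝ)|) := by
      rw [show (Set.range fun x : Set.Icc (-1:ℝ) 1 => |p.eval (x:ℝ)|)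
          = (fun x => |p.eval x|) '' Set.Icc (-1:ℝ) 1 from by ext z; simp]
      exact (isCompact_Icc.image_of_continuousOn
        ((p.continuous_aeval.abs).continuousOn)).bddAbove
    have hM2 : ∀ x ∈ Set.Icc (-1:ℝ) 1, |p.eval x| < ε := fun x hx =>
      (le_ciSup hbdd (⟨x, hx⟩ : Set.Icc (-1:ℝ) 1)).trans_lt hcon
    -- Chebyshev extremal points
    set Xp : ℕ → ℝ := fun k => Real.cos (k * π / n) with hXp
    have hmem : ∀ k, Xp k ∈ Set.Icc (-1:ℝ) 1 := fun k => ⟨neg_one_le_cos _, cos_le_one _⟩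
    have hXdec : ∀ k l : ℕ, k < l → l ≤ n → Xp l < Xp k := by
      intro k l hkl hln
      apply cos_lt_cos_of_nonneg_of_le_pi
      · positivity
      · rw [div_le_iff₀ hnR]
        have : (l:ℝ) ≤ n := by exact_mod_cast hln
        nlinarith [pi_pos]
      · have : (k:ℝ) < l := by exact_mod_cast hkl
        apply div_lt_div_of_pos_right ?_ hnR
        nlinarith [pi_pos]
    have hTX : ∀ k : ℕ, (T ℝ n).eval (Xp k) = (-1)^k := by
      intro k
      have harg : (n:ℝ) * ((k:ℝ) * π / n) = k * π := by field_simp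
      rw [hXp]
      simp only []
      rw [T_real_cos]
      push_cast
      rw [harg]
      have := Real.cos_nat_mul_pi_sub 0 k
      simpa using this
    set q : Polynomial ℝ := Polynomial.C ε * T ℝ n - p with hqdef
    have hq1 : 0 < q.eval 1 := by
      have h1 := hM2 1 (by norm_num)
      have := abs_lt.mp h1
      simp only [hqdef, eval_sub, eval_mul, eval_C, hT1]
      linarith [this.2]
    have hqne : q ≠ 0 := fun h => by simp [h] at hq1
    have hqco : q.coeff n = 0 := by
      have hpc : p.coeff n = 1 := by
        have := hp.coeff_natDegree
        rwa [hdeg] at this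
      rw [hqdef, coeff_sub, coeff_C_mul, T_coeff' n hn, hpc]
      have : ε * 2^(n-1) = 1 := by
        rw [hεdef, show ((2:ℝ)^(n-1) : ℝ) = (2:ℝ)^((n-1 : ℕ) : ℤ) from (zpow_natCast 2 (n-1)).symm,
          ← zpow_add₀ (two_ne_zero)]
        have : 1 - (n:ℤ) + ((n-1:ℕ):ℤ) = 0 := by
          omega
        rw [this, zpow_zero]
      linarith [this]
    have hqdeg : q.natDegree < n := by
      have hle : q.natDegree ≤ n := by
        rw [hqdef]
        refine (natDegree_sub_le _ _).trans (max_le ?_ (le_of_eq hdeg))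
        refine natDegree_mul_le.trans ?_
        simp [T_natDegree' n hn]
      rcases hle.lt_or_eq with h | h
      · exact h
      · exfalso
        exact (leadingCoeff_ne_zero.mpr hqne) (by rwa [leadingCoeff, h])
    have hsign : ∀ k : ℕ, k ≤ n → 0 < (-1:ℝ)^k * q.eval (Xp k) := by
      intro k hk
      have hpk := abs_lt.mp (hM2 _ (hmem k))
      have hq : q.eval (Xp k) = ε * (-1)^k - p.eval (Xp k) := by
        simp [hqdef, hTX k]
      rcases Nat.even_or_odd k with h | h
      · rw [h.neg_one_pow] at hq ⊢
        simp only [one_mul]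
        linarith [hpk.2, hq]
      · rw [h.neg_one_pow] at hq ⊢
        rw [hq]; nlinarith [hpk.1]
    have hprod : ∀ k : ℕ, k + 1 ≤ n → q.eval (Xp (k+1)) * q.eval (Xp k) < 0 := by
      intro k hk
      have h1 := hsign k (by omega)
      have h2 := hsign (k+1) hk
      have ha : ((-1:ℝ)^k)^2 = 1 := by
        rw [← pow_mul, mul_comm, pow_mul]; norm_num
      rw [pow_succ] at h2
      nlinarith [mul_pos h1 h2]
    have hroot : ∀ k : Fin n, ∃ y ∈ Set.Ioo (Xp (k+1)) (Xp k), q.eval y = 0 := by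
      intro k
      exact exists_root_Ioo q (hXdec k (k+1) (Nat.lt_succ_self _) k.2) (hprod k k.2)
    choose y hy1 hy2 using hroot
    have hyanti : ∀ a b : Fin n, (a:ℕ) < (b:ℕ) → y b < y a := by
      intro a b hab
      have h1 : y b < Xp b := (hy1 b).2
      have h2 : Xp (a+1) < y a := (hy1 a).1
      have h3 : Xp (b:ℕ) ≤ Xp ((a:ℕ)+1) := by
        rcases eq_or_lt_of_le (by omega : (a:ℕ)+1 ≤ (b:ℕ)) with h | h
        · rw [h]
        · exact (hXdec _ _ h (le_of_lt b.2)).le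
      linarith
    have hinj : Function.Injective y := by
      intro a b hab
      by_contra hne
      rcases lt_or_gt_of_ne (fun h : (a:ℕ) = (b:ℕ) => hne (Fin.ext h)) with h | h
      · exact absurd hab (by have := hyanti a b h; exact fun h' => by linarith [h'.symm ▸ this])
      · exact absurd hab (by have := hyanti b a h; exact fun h' => by linarith [h' ▸ this])
    have hzero : q = 0 :=
      Polynomial.eq_zero_of_natDegree_lt_card_of_eval_eq_zero q hinj hy2
        (by simpa using hqdeg)
    exact hqne hzero
end

section
/- If (X_n) is a sequence of random variables, each with all moments finite, X is a random variable whose distribution is determined by its moments, and E[X_n^k] → E[X^k] for every k ≥ 1, then X_n converges to X in distribution. -/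
open MeasureTheory Filter Set ProbabilityTheory

noncomputable section

/-! ### Generalized inverse (quantile) of a monotone function -/

def mmQF (F : ℝ → ℝ) (u : ℝ) : ℝ := sInf {x | u ≤ F x}

lemma mmQF_le {F : ℝ → ℝ} {u x : ℝ} (hbdd : BddBelow {x | u ≤ F x}) (hx : u ≤ F x) :
    mmQF F u ≤ x := csInf_le hbdd hx

lemma le_mmQF {F : ℝ → ℝ} {u c : ℝ} (hne : {x | u ≤ F x}.Nonempty)
    (h : ∀ x, u ≤ F x → c ≤ x) : c ≤ mmQF F u := le_csInf hne h

lemma mmQF_le_iff {F : ℝ → ℝ} (hmono : Monotone F)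
    (hrc : ∀ x, ContinuousWithinAt F (Ici x) x) {u x : ℝ}
    (hne : {x | u ≤ F x}.Nonempty) (hbdd : BddBelow {x | u ≤ F x}) :
    mmQF F u ≤ x ↔ u ≤ F x := by
  constructor
  · intro h
    have h1 : ∀ y ∈ Ioi x, u ≤ F y := by
      intro y hy
      obtain ⟨z, hz, hzy⟩ := (csInf_lt_iff hbdd hne).1 (lt_of_le_of_lt h hy)
      exact le_trans hz (hmono hzy.le)
    have h2 : Tendsto F (nhdsWithin x (Ioi x)) (nhds (F x)) :=
      (hrc x).mono Ioi_subset_Ici_self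
    exact ge_of_tendsto h2 (eventually_nhdsWithin_of_forall h1)
  · intro h; exact mmQF_le hbdd h

/-! ### Even-power helpers and Chebyshev bounds for cdfs -/

lemma mm_even_pow_pos {q : ℝ} (hq : q ≠ 0) (k : ℕ) : (0:ℝ) < q ^ (2 * k) := by
  rw [← (even_two_mul k).pow_abs]
  positivity

lemma mm_abs_le_pow {q x : ℝ} {k : ℕ} (h : |q| ≤ |x|) : q ^ (2 * k) ≤ x ^ (2 * k) := by
  have h1 : |q| ^ (2 * k) ≤ |x| ^ (2 * k) := pow_le_pow_left₀ (abs_nonneg q) h _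
  rwa [(even_two_mul k).pow_abs, (even_two_mul k).pow_abs] at h1

lemma mm_cheb {m : Measure ℝ} [IsProbabilityMeasure m] {k : ℕ}
    (hint : Integrable (fun x => x ^ (2 * k)) m) {C : ℝ}
    (hC : ∫ x, x ^ (2 * k) ∂m ≤ C) {s : Set ℝ} {q : ℝ} (hq : q ≠ 0)
    (hsub : s ⊆ {x | q ^ (2 * k) ≤ x ^ (2 * k)}) :
    (m s).toReal * q ^ (2 * k) ≤ C := by
  have hnn : 0 ≤ᵐ[m] fun x => x ^ (2 * k) := by
    filter_upwards with x
    rw [pow_mul]; positivity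
  have h1 := mul_meas_ge_le_integral_of_nonneg hnn hint (q ^ (2 * k))
  have h3 : (m s).toReal ≤ (m {x | q ^ (2 * k) ≤ x ^ (2 * k)}).toReal :=
    ENNReal.toReal_mono (measure_ne_top _ _) (measure_mono hsub)
  have hqk := mm_even_pow_pos hq k
  rw [measureReal_def] at h1
  nlinarith [(m s).toReal_nonneg]

lemma mm_cdf_lower {m : Measure ℝ} [IsProbabilityMeasure m] {k : ℕ}
    (hint : Integrable (fun x => x ^ (2 * k)) m) {C : ℝ}
    (hC : ∫ x, x ^ (2 * k) ∂m ≤ C) {q : ℝ} (hq : 0 < q) :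
    1 - C / q ^ (2 * k) ≤ cdf m q := by
  have h1 : (m (Set.Ioi q)).toReal * q ^ (2 * k) ≤ C :=
    mm_cheb hint hC hq.ne' fun x hx =>
      mm_abs_le_pow (by rw [abs_of_pos hq, abs_of_pos (hq.trans hx)]; exact le_of_lt hx)
  have h2 : (m (Set.Ioi q)).toReal = 1 - cdf m q := by
    have hc : m (Set.Ioi q) = 1 - m (Set.Iic q) := by
      rw [← Set.compl_Iic, prob_compl_eq_one_sub measurableSet_Iic]
    rw [hc, cdf_eq_real, measureReal_def, ENNReal.toReal_sub_of_le prob_le_one (by simp)]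
    simp
  have hqk := mm_even_pow_pos hq.ne' k
  rw [h2] at h1
  have h4 : 1 - cdf m q ≤ C / q ^ (2 * k) := (le_div_iff₀ hqk).2 h1
  linarith

lemma mm_cdf_upper {m : Measure ℝ} [IsProbabilityMeasure m] {k : ℕ}
    (hint : Integrable (fun x => x ^ (2 * k)) m) {C : ℝ}
    (hC : ∫ x, x ^ (2 * k) ∂m ≤ C) {q : ℝ} (hq : q < 0) :
    cdf m q ≤ C / q ^ (2 * k) := by
  have h1 : (m (Set.Iic q)).toReal * q ^ (2 * k) ≤ C :=
    mm_cheb hint hC hq.ne fun x hx =>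
      mm_abs_le_pow (by rw [abs_of_neg hq, abs_of_neg (lt_of_le_of_lt hx hq)]; simpa using hx)
  have hqk := mm_even_pow_pos hq.ne k
  rw [cdf_eq_real, measureReal_def, le_div_iff₀ hqk]
  exact h1

/-! ### cdf quantiles and the inverse-cdf representation -/

section cdfstuff
variable (m : Measure ℝ) [IsProbabilityMeasure m]

lemma mm_cdf_ne {u : ℝ} (hu : u < 1) : {x | u ≤ cdf m x}.Nonempty := by
  obtain ⟨x, hx⟩ := ((tendsto_cdf_atTop m).eventually_const_lt hu).exists
  exact ⟨x, hx.le⟩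

lemma mm_cdf_bdd {u : ℝ} (hu : 0 < u) : BddBelow {x | u ≤ cdf m x} := by
  obtain ⟨x₀, hx₀⟩ := eventually_atBot.1 ((tendsto_cdf_atBot m).eventually_lt_const hu)
  refine ⟨x₀, fun y hy => ?_⟩
  by_contra hc
  exact absurd hy (not_le.2 (hx₀ y (le_of_not_ge hc)))

lemma mm_cdf_monoOn : MonotoneOn (mmQF (cdf m)) (Ioo 0 1) := by
  intro u hu v hv huv
  exact csInf_le_csInf (mm_cdf_bdd m hu.1) (mm_cdf_ne m hv.2)
    (fun x hx => le_trans huv hx)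

lemma mm_cdf_aemeas : AEMeasurable (mmQF (cdf m)) (volume.restrict (Ioo 0 1)) :=
  aemeasurable_restrict_of_monotoneOn measurableSet_Ioo (mm_cdf_monoOn m)

instance : IsProbabilityMeasure (volume.restrict (Ioo (0:ℝ) 1)) := by
  constructor
  rw [Measure.restrict_apply_univ, Real.volume_Ioo]
  norm_num

lemma mm_vol_inter {c : ℝ} (hc0 : 0 ≤ c) (hc1 : c ≤ 1) :
    volume (Iic c ∩ Ioo (0:ℝ) 1) = ENNReal.ofReal c := by
  rcases lt_or_ge c 1 with h | h
  · have : Iic c ∩ Ioo (0:ℝ) 1 = Ioc 0 c := by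
      ext x
      simp only [mem_inter_iff, mem_Iic, mem_Ioo, mem_Ioc]
      constructor
      · rintro ⟨h1, h2, h3⟩; exact ⟨h2, h1⟩
      · rintro ⟨h1, h2⟩; exact ⟨h2, h1, lt_of_le_of_lt h2 h⟩
    rw [this, Real.volume_Ioc, sub_zero]
  · have hc : c = 1 := le_antisymm hc1 h
    subst hc
    have : Iic (1:ℝ) ∩ Ioo (0:ℝ) 1 = Ioo 0 1 := by
      ext x; simp only [mem_inter_iff, mem_Iic, mem_Ioo]
      exact ⟨fun h => h.2, fun h => ⟨h.2.le, h⟩⟩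
    rw [this, Real.volume_Ioo]
    norm_num

lemma mm_map_qf : Measure.map (mmQF (cdf m)) (volume.restrict (Ioo 0 1)) = m := by
  refine MeasureTheory.Measure.ext_of_Iic _ _ (fun a => ?_)
  rw [Measure.map_apply_of_aemeasurable (mm_cdf_aemeas m) measurableSet_Iic,
    Measure.restrict_apply' measurableSet_Ioo]
  have hset : mmQF (cdf m) ⁻¹' Iic a ∩ Ioo 0 1 = Iic (cdf m a) ∩ Ioo (0:ℝ) 1 := by
    ext u
    simp only [mem_inter_iff, mem_preimage, mem_Iic, mem_Ioo, and_congr_left_iff]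
    intro hu
    exact mmQF_le_iff (cdf m).mono (cdf m).right_continuous
      (mm_cdf_ne m hu.2) (mm_cdf_bdd m hu.1)
  rw [hset, mm_vol_inter (cdf_nonneg m a) (cdf_le_one m a), ofReal_cdf]

end cdfstuff

/-! ### The limiting cdf candidate `mmG H` -/

def mmG (H : ℚ → ℝ) (x : ℝ) : ℝ := sInf (H '' {q : ℚ | x < (q:ℝ)})

section G

variable {H : ℚ → ℝ} (h0 : ∀ q, 0 ≤ H q) (h1 : ∀ q, H q ≤ 1)
  (hmono : ∀ q r : ℚ, q ≤ r → H q ≤ H r)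

lemma mmG_ne (x : ℝ) : (H '' {q : ℚ | x < (q:ℝ)}).Nonempty := by
  obtain ⟨q, hq⟩ := exists_rat_gt x
  exact ⟨H q, ⟨q, hq, rfl⟩⟩

include h0 in
lemma mmG_bdd (x : ℝ) : BddBelow (H '' {q : ℚ | x < (q:ℝ)}) :=
  ⟨0, fun y ⟨q, _, hq⟩ => hq ▸ h0 q⟩

include h0 in
lemma mmG_le {x : ℝ} {q : ℚ} (hq : x < q) : mmG H x ≤ H q :=
  csInf_le (mmG_bdd h0 x) ⟨q, hq, rfl⟩

include hmono in
lemma le_mmG {x : ℝ} {q : ℚ} (hq : (q:ℝ) ≤ x) : H q ≤ mmG H x :=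
  le_csInf (mmG_ne x) (fun y ⟨r, hr, hry⟩ => hry ▸ hmono q r (by exact_mod_cast hq.trans_lt hr |>.le))

end G

/-! ### Tail estimates and quantile bounds -/

section tails

variable {F : ℝ → ℝ} {k : ℕ} {C D : ℝ}

lemma mm_rpow_trick (hk : 1 ≤ k) {t : ℝ} (ht : 0 ≤ t) :
    t < (t ^ ((1:ℝ)/(2*k)) + 1) ^ (2*k) := by
  have h2k : (0:ℝ) < 2 * k := by positivity
  have hb : 0 ≤ t ^ ((1:ℝ)/(2*k)) := Real.rpow_nonneg ht _
  have h1 : t ^ ((1:ℝ)/(2*k)) < t ^ ((1:ℝ)/(2*k)) + 1 := by linarith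
  have h3 : (t ^ ((1:ℝ)/(2*k))) ^ (2*k) < (t ^ ((1:ℝ)/(2*k)) + 1) ^ (2*k) :=
    pow_lt_pow_left₀ h1 hb (by positivity)
  calc t = (t ^ ((1:ℝ)/(2*k))) ^ (2*k) := by
        rw [← Real.rpow_natCast (t ^ ((1:ℝ)/(2*k))) (2*k), ← Real.rpow_mul ht, one_div]
        push_cast
        rw [inv_mul_cancel₀ (by positivity : (2:ℝ) * k ≠ 0), Real.rpow_one]
    _ < _ := h3

lemma mm_tail_ne (hk : 1 ≤ k) (hC : 0 < C)
    (hlow : ∀ x : ℝ, 0 < x → 1 - C / x ^ (2*k) ≤ F x) {u : ℝ} (hu : u < 1) :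
    ∃ x : ℝ, 0 < x ∧ x ≤ (C/(1-u)) ^ ((1:ℝ)/(2*k)) + 1 ∧ u ≤ F x := by
  set t : ℝ := C / (1 - u) with ht
  have ht0 : 0 < t := div_pos hC (by linarith)
  set x : ℝ := t ^ ((1:ℝ)/(2*k)) + 1 with hx
  have hx0 : 0 < x := by positivity
  refine ⟨x, hx0, le_refl _, ?_⟩
  have h1 : t < x ^ (2*k) := mm_rpow_trick hk ht0.le
  have h2 : C / x ^ (2*k) < 1 - u := by
    rw [div_lt_iff₀ (by positivity)]
    rw [ht, div_lt_iff₀ (by linarith : (0:ℝ) < 1 - u)] at h1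
    nlinarith
  linarith [hlow x hx0]

lemma mm_tail_lb (hk : 1 ≤ k) (hD : 0 < D)
    (hup : ∀ x : ℝ, x < 0 → F x ≤ D / x ^ (2*k)) {u : ℝ} (hu : 0 < u) :
    ∀ y : ℝ, u ≤ F y → -((D/u) ^ ((1:ℝ)/(2*k)) + 1) ≤ y := by
  intro y hy
  set s : ℝ := (D/u) ^ ((1:ℝ)/(2*k)) with hs
  have hs0 : 0 ≤ s := Real.rpow_nonneg (by positivity) _
  by_contra hc
  push_neg at hc
  have hyneg : y < 0 := by linarith
  have h1 : D / u < (s+1) ^ (2*k) := mm_rpow_trick hk (by positivity)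
  have h2 : (s+1) ^ (2*k) ≤ y ^ (2*k) := mm_abs_le_pow (by
    rw [abs_of_nonneg (by linarith : (0:ℝ) ≤ s + 1), abs_of_neg hyneg]; linarith)
  have h3 : F y ≤ D / y ^ (2*k) := hup y hyneg
  have hy2k : (0:ℝ) < y ^ (2*k) := lt_of_lt_of_le (by positivity) h2
  have h4 : D / y ^ (2*k) < u := by
    rw [div_lt_iff₀ hy2k]
    rw [div_lt_iff₀ hu] at h1
    nlinarith
  linarith

lemma mm_tailS_ne (hk : 1 ≤ k) (hC : 0 < C)
    (hlow : ∀ x : ℝ, 0 < x → 1 - C / x ^ (2*k) ≤ F x) {u : ℝ} (hu : u < 1) :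
    {x | u ≤ F x}.Nonempty := by
  obtain ⟨x, _, _, hx⟩ := mm_tail_ne hk hC hlow hu
  exact ⟨x, hx⟩

lemma mm_tailS_bdd (hk : 1 ≤ k) (hD : 0 < D)
    (hup : ∀ x : ℝ, x < 0 → F x ≤ D / x ^ (2*k)) {u : ℝ} (hu : 0 < u) :
    BddBelow {x | u ≤ F x} :=
  ⟨-((D/u) ^ ((1:ℝ)/(2*k)) + 1), fun y hy => mm_tail_lb hk hD hup hu y hy⟩

end tails

lemma mm_pow_bound {a b : ℝ} (ha : 0 ≤ a) (hb : 0 ≤ b) (k : ℕ) :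
    (a + b + 1) ^ k ≤ 3 ^ k * (a ^ k + b ^ k + 1) := by
  set M : ℝ := max a (max b 1) with hM
  have hM0 : 0 ≤ M := le_trans zero_le_one (le_max_of_le_right (le_max_right _ _))
  have h1 : a + b + 1 ≤ 3 * M := by
    have h2 := le_max_left a (max b 1)
    have h3 : b ≤ M := le_max_of_le_right (le_max_left b 1)
    have h4 : (1:ℝ) ≤ M := le_max_of_le_right (le_max_right b 1)
    linarith
  calc (a + b + 1) ^ k ≤ (3 * M) ^ k := pow_le_pow_left₀ (by positivity) h1 k
    _ = 3 ^ k * M ^ k := mul_pow 3 M k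
    _ ≤ 3 ^ k * (a ^ k + b ^ k + 1) := by
        have hMk : M ^ k ≤ a ^ k + b ^ k + 1 := by
          have h2 : M ^ k = a ^ k ∨ M ^ k = b ^ k ∨ M ^ k = 1 := by
            rcases max_cases a (max b 1) with ⟨h, _⟩ | ⟨h, _⟩
            · exact Or.inl (by rw [hM, h])
            · rcases max_cases b 1 with ⟨h', _⟩ | ⟨h', _⟩
              · exact Or.inr (Or.inl (by rw [hM, h, h']))
              · exact Or.inr (Or.inr (by rw [hM, h, h', one_pow]))
          have ha' : 0 ≤ a ^ k := by positivity
          have hb' : 0 ≤ b ^ k := by positivity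
          rcases h2 with h | h | h <;> rw [h] <;> linarith
        have : (0:ℝ) ≤ 3 ^ k := by positivity
        nlinarith

lemma mm_rpow_pow {k : ℕ} (hk : 1 ≤ k) {t : ℝ} (ht : 0 ≤ t) :
    (t ^ ((1:ℝ)/(2*k))) ^ k = Real.sqrt t := by
  rw [← Real.rpow_natCast (t ^ ((1:ℝ)/(2*k))) k, ← Real.rpow_mul ht, Real.sqrt_eq_rpow]
  congr 1
  have hk0 : (k:ℝ) ≠ 0 := by positivity
  field_simp

/-- The key pointwise domination of quantile powers. -/
lemma mm_qf_pow_le {F : ℝ → ℝ} {k : ℕ} (hk : 1 ≤ k) {E : ℝ} (hE : 0 < E)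
    (hlow : ∀ x : ℝ, 0 < x → 1 - E / x ^ (2*k) ≤ F x)
    (hup : ∀ x : ℝ, x < 0 → F x ≤ E / x ^ (2*k))
    {u : ℝ} (hu : u ∈ Ioo (0:ℝ) 1) :
    |mmQF F u| ^ k ≤ 3 ^ k * (Real.sqrt (E/(1-u)) + Real.sqrt (E/u) + 1) := by
  have h1u : (0:ℝ) < 1 - u := by linarith [hu.2]
  have hu0 : (0:ℝ) < u := hu.1
  have hEu : (0:ℝ) ≤ E / u := div_nonneg hE.le hu0.le
  have hE1u : (0:ℝ) ≤ E / (1-u) := div_nonneg hE.le h1u.le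
  have hne := mm_tailS_ne hk hE hlow hu.2
  have hbdd := mm_tailS_bdd hk hE hup hu.1
  set a : ℝ := (E/(1-u)) ^ ((1:ℝ)/(2*k)) with hadef
  set b : ℝ := (E/u) ^ ((1:ℝ)/(2*k)) with hbdef
  have ha0 : 0 ≤ a := Real.rpow_nonneg hE1u _
  have hb0 : 0 ≤ b := Real.rpow_nonneg hEu _
  have hup' : mmQF F u ≤ a + 1 := by
    obtain ⟨x, _, hx2, hx3⟩ := mm_tail_ne hk hE hlow hu.2
    exact le_trans (mmQF_le hbdd hx3) hx2
  have hlow' : -(b + 1) ≤ mmQF F u :=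
    le_mmQF hne (fun x hx => mm_tail_lb hk hE hup hu.1 x hx)
  have habs : |mmQF F u| ≤ a + b + 1 := by
    rw [abs_le]
    constructor
    · linarith
    · linarith
  calc |mmQF F u| ^ k ≤ (a + b + 1) ^ k := pow_le_pow_left₀ (abs_nonneg _) habs k
    _ ≤ 3 ^ k * (a ^ k + b ^ k + 1) := mm_pow_bound ha0 hb0 k
    _ = 3 ^ k * (Real.sqrt (E/(1-u)) + Real.sqrt (E/u) + 1) := by
        rw [hadef, hbdef, mm_rpow_pow hk hE1u, mm_rpow_pow hk hEu]

/-! ### Integrability of the dominating function -/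

lemma mm_sqrt_eq {E : ℝ} (hE : 0 ≤ E) {u : ℝ} (hu : 0 ≤ u) :
    Real.sqrt (E/u) = Real.sqrt E * u ^ (-(1/2) : ℝ) := by
  rw [Real.sqrt_div hE, div_eq_mul_inv, Real.sqrt_eq_rpow u, ← Real.rpow_neg hu]

lemma mm_gdom_integrable {E : ℝ} (hE : 0 ≤ E) (c : ℝ) :
    IntegrableOn (fun u : ℝ => c * (Real.sqrt (E/(1-u)) + Real.sqrt (E/u) + 1))
      (Ioo (0:ℝ) 1) volume := by
  have base : IntegrableOn (fun u : ℝ => u ^ (-(1/2) : ℝ)) (Ioo (0:ℝ) 1) volume :=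
    (intervalIntegral.integrableOn_Ioo_rpow_iff zero_lt_one).2 (by norm_num)
  have h1 : IntegrableOn (fun u : ℝ => Real.sqrt (E/u)) (Ioo (0:ℝ) 1) volume := by
    refine IntegrableOn.congr_fun (base.const_mul (Real.sqrt E)) ?_ measurableSet_Ioo
    intro u hu
    exact (mm_sqrt_eq hE hu.1.le).symm
  have hmp : MeasurePreserving (fun x : ℝ => 1 - x)
      (volume.restrict (Ioo (0:ℝ) 1)) (volume.restrict (Ioo (0:ℝ) 1)) := by
    have h := (Measure.measurePreserving_sub_left volume (1:ℝ)).restrict_preimage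
      (s := Ioo (0:ℝ) 1) measurableSet_Ioo
    have hpre : (fun x : ℝ => 1 - x) ⁻¹' Ioo (0:ℝ) 1 = Ioo (0:ℝ) 1 := by
      ext x; simp only [mem_preimage, mem_Ioo]
      constructor <;> (rintro ⟨a, b⟩; constructor <;> linarith)
    rwa [hpre] at h
  have h2 : IntegrableOn (fun u : ℝ => Real.sqrt (E/(1-u))) (Ioo (0:ℝ) 1) volume := by
    have hmeas : AEStronglyMeasurable (fun u : ℝ => Real.sqrt (E/u))
        (volume.restrict (Ioo (0:ℝ) 1)) :=
      ((measurable_const.div measurable_id).sqrt).aestronglyMeasurable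
    exact (hmp.integrable_comp hmeas).2 h1
  exact (((h2.add h1).add (integrableOn_const (by simp))).const_mul c)


/-! ### Properties of the limit `H` and its regularization -/

section limitH

variable {ms : ℕ → Measure ℝ} [∀ j, IsProbabilityMeasure (ms j)]
  {H : ℚ → ℝ} (hH : ∀ q : ℚ, Tendsto (fun j => cdf (ms j) (q:ℝ)) atTop (nhds (H q)))

include hH

lemma mm_H_nonneg (q : ℚ) : 0 ≤ H q :=
  ge_of_tendsto (hH q) (Eventually.of_forall fun j => cdf_nonneg (ms j) q)

lemma mm_H_le_one (q : ℚ) : H q ≤ 1 :=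
  le_of_tendsto (hH q) (Eventually.of_forall fun j => cdf_le_one (ms j) q)

lemma mm_H_mono (q r : ℚ) (hqr : q ≤ r) : H q ≤ H r :=
  le_of_tendsto_of_tendsto (hH q) (hH r)
    (Eventually.of_forall fun j => (cdf (ms j)).mono (by exact_mod_cast hqr))

variable {k : ℕ} {C : ℝ}
  (hmom : ∀ j, Integrable (fun x => x ^ (2*k)) (ms j))
  (hCb : ∀ j, ∫ x, x ^ (2*k) ∂(ms j) ≤ C)

include hmom hCb

lemma mm_H_lower {q : ℚ} (hq : 0 < (q:ℝ)) : 1 - C / (q:ℝ) ^ (2*k) ≤ H q :=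
  ge_of_tendsto (hH q) (Eventually.of_forall fun j => mm_cdf_lower (hmom j) (hCb j) hq)

lemma mm_H_upper {q : ℚ} (hq : (q:ℝ) < 0) : H q ≤ C / (q:ℝ) ^ (2*k) :=
  le_of_tendsto (hH q) (Eventually.of_forall fun j => mm_cdf_upper (hmom j) (hCb j) hq)

lemma mm_G_lower (hC : 0 < C) {x : ℝ} (hx : 0 < x) : 1 - C / x ^ (2*k) ≤ mmG H x := by
  refine le_csInf (mmG_ne x) ?_
  rintro y ⟨q, hq, rfl⟩
  have hqx : 0 < (q:ℝ) := hx.trans hq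
  have h1 : 1 - C / (q:ℝ) ^ (2*k) ≤ H q := mm_H_lower hH hmom hCb hqx
  have h2 : C / (q:ℝ) ^ (2*k) ≤ C / x ^ (2*k) := by
    apply div_le_div_of_nonneg_left hC.le (mm_even_pow_pos hx.ne' k)
    exact mm_abs_le_pow (by rw [abs_of_pos hx, abs_of_pos hqx]; exact hq.le)
  linarith

lemma mm_G_upper (hC : 0 < C) {x : ℝ} (hx : x < 0) :
    mmG H x ≤ (4:ℝ) ^ k * C / x ^ (2*k) := by
  obtain ⟨q, hq1, hq2⟩ := exists_rat_btwn (show x < x/2 by linarith)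
  have hq0 : (q:ℝ) < 0 := by linarith
  have h1 : mmG H x ≤ H q := mmG_le (mm_H_nonneg hH) hq1
  have h2 : H q ≤ C / (q:ℝ) ^ (2*k) := mm_H_upper hH hmom hCb hq0
  have hx2 : x ^ (2*k) ≤ (4:ℝ)^k * (q:ℝ) ^ (2*k) := by
    have hsq : x^2 ≤ 4 * (q:ℝ)^2 := by nlinarith
    calc x ^ (2*k) = (x^2) ^ k := by rw [← pow_mul]
      _ ≤ (4 * (q:ℝ)^2) ^ k := pow_le_pow_left₀ (sq_nonneg x) hsq k
      _ = (4:ℝ)^k * ((q:ℝ)^2)^k := mul_pow 4 _ k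
      _ = (4:ℝ)^k * (q:ℝ) ^ (2*k) := by rw [← pow_mul]
  have hq2k := mm_even_pow_pos hq0.ne k
  have hx2k := mm_even_pow_pos hx.ne k
  have h3 : C / (q:ℝ) ^ (2*k) ≤ (4:ℝ)^k * C / x ^ (2*k) := by
    rw [div_le_div_iff₀ hq2k hx2k]
    nlinarith
  linarith

lemma mm_Q_monoOn (hk : 1 ≤ k) (hC : 0 < C) :
    MonotoneOn (mmQF (mmG H)) (Ioo (0:ℝ) 1) := by
  have hGlow : ∀ x : ℝ, 0 < x → 1 - C / x ^ (2*k) ≤ mmG H x :=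
    fun x hx => mm_G_lower hH hmom hCb hC hx
  have hGup : ∀ x : ℝ, x < 0 → mmG H x ≤ ((4:ℝ)^k * C) / x ^ (2*k) :=
    fun x hx => mm_G_upper hH hmom hCb hC hx
  have hD : (0:ℝ) < (4:ℝ)^k * C := by positivity
  intro a ha b hb hab
  exact csInf_le_csInf (mm_tailS_bdd hk hD hGup ha.1) (mm_tailS_ne hk hC hGlow hb.2)
    (fun x hx => le_trans hab hx)

end limitH

/-! ### Almost-everywhere convergence of quantiles -/

theorem mm_ae_tendsto {ms : ℕ → Measure ℝ} [∀ j, IsProbabilityMeasure (ms j)]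
    {H : ℚ → ℝ} (hH : ∀ q : ℚ, Tendsto (fun j => cdf (ms j) (q:ℝ)) atTop (nhds (H q)))
    {C : ℝ} (hC : 0 < C)
    (hmom : ∀ j, Integrable (fun x => x ^ (2*1)) (ms j))
    (hCb : ∀ j, ∫ x, x ^ (2*1) ∂(ms j) ≤ C) :
    ∀ᵐ u ∂(volume.restrict (Ioo (0:ℝ) 1)),
      Tendsto (fun j => mmQF (cdf (ms j)) u) atTop (nhds (mmQF (mmG H) u)) := by
  have h0 := mm_H_nonneg hH
  have h1 := mm_H_le_one hH
  have hGlow : ∀ x : ℝ, 0 < x → 1 - C / x ^ (2*1) ≤ mmG H x :=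
    fun x hx => mm_G_lower hH hmom hCb hC hx
  have hGup : ∀ x : ℝ, x < 0 → mmG H x ≤ ((4:ℝ)^1 * C) / x ^ (2*1) :=
    fun x hx => mm_G_upper hH hmom hCb hC hx
  have hD : (0:ℝ) < (4:ℝ)^1 * C := by positivity
  have hGne : ∀ {u : ℝ}, u < 1 → {x | u ≤ mmG H x}.Nonempty :=
    fun hu => mm_tailS_ne le_rfl hC hGlow hu
  have hGbdd : ∀ {u : ℝ}, 0 < u → BddBelow {x | u ≤ mmG H x} :=
    fun hu => mm_tailS_bdd le_rfl hD hGup hu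
  set Q : ℝ → ℝ := mmQF (mmG H) with hQdef
  have hQmonoOn : MonotoneOn Q (Ioo (0:ℝ) 1) := by
    intro a ha b hb hab
    exact csInf_le_csInf (hGbdd ha.1) (hGne hb.2) (fun x hx => le_trans hab hx)
  set Qm : ℕ → ℝ → ℝ :=
    fun m u => Q (max (1/(m+2):ℝ) (min u (1 - 1/(m+2)))) with hQmdef
  have hmem : ∀ (m : ℕ) (u : ℝ), (max (1/(m+2):ℝ) (min u (1 - 1/(m+2)))) ∈ Ioo (0:ℝ) 1 := by
    intro m u
    have hm2 : (0:ℝ) < 1/(m+2) := by positivity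
    have hm2'' : (2:ℝ) ≤ (m:ℝ) + 2 := by
      have := Nat.cast_nonneg (α := ℝ) m
      linarith
    have hm2' : (1:ℝ)/(m+2) ≤ 1/2 := one_div_le_one_div_of_le two_pos hm2''
    constructor
    · exact lt_of_lt_of_le hm2 (le_max_left _ _)
    · apply max_lt
      · linarith
      · exact lt_of_le_of_lt (min_le_right _ _) (by linarith)
  have hclampmono : ∀ m : ℕ, Monotone fun u : ℝ => max (1/(m+2):ℝ) (min u (1 - 1/(m+2))) :=
    fun m a b hab => max_le_max le_rfl (min_le_min hab le_rfl)
  have hQmMono : ∀ m, Monotone (Qm m) :=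
    fun m a b hab => hQmonoOn (hmem m a) (hmem m b) (hclampmono m hab)
  set B : Set ℝ := ⋃ m, {u | ¬ContinuousAt (Qm m) u} with hBdef
  have hBc : B.Countable := countable_iUnion fun m => (hQmMono m).countable_not_continuousAt
  have hBae : ∀ᵐ u ∂(volume : Measure ℝ), u ∉ B :=
    measure_eq_zero_iff_ae_notMem.mp (hBc.measure_zero _)
  rw [ae_restrict_iff' measurableSet_Ioo]
  filter_upwards [hBae] with u huB huIoo
  have hu0 : (0:ℝ) < u := huIoo.1
  have hu1 : u < 1 := huIoo.2
  rw [Metric.tendsto_nhds]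
  intro ε hε
  -- lower bound, eventually
  have hlow_ev : ∀ᶠ j in atTop, Q u - ε/2 < mmQF (cdf (ms j)) u := by
    have hx'lt : Q u - ε/2 < Q u := by linarith
    have hGx' : mmG H (Q u - ε/2) < u := by
      by_contra hcon
      push_neg at hcon
      exact absurd (mmQF_le (hGbdd hu0) hcon) (not_le.2 hx'lt)
    obtain ⟨y, ⟨q, hq, rfl⟩, hyu⟩ := (csInf_lt_iff (mmG_bdd h0 _) (mmG_ne _)).1 hGx'
    have hq' : Q u - ε/2 < (q:ℝ) := hq
    filter_upwards [(hH q).eventually_lt_const hyu] with j hj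
    have hqle : (q:ℝ) ≤ mmQF (cdf (ms j)) u := by
      refine le_mmQF (mm_cdf_ne (ms j) hu1) (fun y hy => ?_)
      by_contra hc
      push_neg at hc
      have := (cdf (ms j)).mono hc.le
      linarith
    linarith
  -- upper bound, eventually
  have hup_ev : ∀ᶠ j in atTop, mmQF (cdf (ms j)) u < Q u + ε := by
    obtain ⟨n, hn⟩ := exists_nat_one_div_lt (show (0:ℝ) < min u (1-u) by
      exact lt_min hu0 (by linarith))
    have hn2 : (1:ℝ)/(n+2) < min u (1-u) := by
      refine lt_of_le_of_lt ?_ hn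
      apply div_le_div_of_nonneg_left one_pos.le (by positivity)
      push_cast; linarith
    have hnu : (1:ℝ)/(n+2) < u := lt_of_lt_of_le hn2 (min_le_left _ _)
    have hnu' : (1:ℝ)/(n+2) < 1 - u := lt_of_lt_of_le hn2 (min_le_right _ _)
    have hcont : ContinuousAt (Qm n) u := by
      by_contra hcon
      exact huB (mem_iUnion.2 ⟨n, hcon⟩)
    obtain ⟨δ, hδ0, hδ⟩ := Metric.continuousAt_iff.1 hcont (ε/4) (by positivity)
    set b : ℝ := 1 - 1/(n+2) with hbdef
    have hub : u < b := by rw [hbdef]; linarith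
    set v : ℝ := min (u + δ/2) ((u + b)/2) with hvdef
    have hva : u < v := lt_min (by linarith) (by linarith)
    have hvb : v < b := lt_of_le_of_lt (min_le_right _ _) (by linarith)
    have hv0 : 0 < v := hu0.trans hva
    have hv1 : v < 1 := by
      have hb' : (0:ℝ) < 1/(n+2) := by positivity
      have hblt : b < 1 := by rw [hbdef]; linarith
      linarith
    have hQeq : ∀ w : ℝ, 1/(n+2) < w → w < b → Qm n w = Q w := by
      intro w hw1 hw2
      rw [hQmdef]
      simp only []
      rw [min_eq_left hw2.le, max_eq_right hw1.le]
    have hdist : dist v u < δ := by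
      rw [Real.dist_eq, abs_of_pos (by linarith : 0 < v - u)]
      have : v ≤ u + δ/2 := min_le_left _ _
      linarith
    have hQv : Q v < Q u + ε/4 := by
      have h := hδ hdist
      rw [hQeq v (hnu.trans hva) hvb, hQeq u hnu hub, Real.dist_eq] at h
      have := (abs_sub_lt_iff.1 h).1
      linarith
    obtain ⟨c, hc1, hc2⟩ := exists_rat_btwn (show Q v < Q u + ε/2 by linarith)
    have hHc : v ≤ H c := by
      obtain ⟨x, hxS, hxc⟩ := (csInf_lt_iff (hGbdd hv0) (hGne hv1)).1 hc1
      exact le_trans hxS (mmG_le h0 hxc)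
    filter_upwards [(hH c).eventually_const_lt (lt_of_lt_of_le hva hHc)] with j hj
    have := mmQF_le (mm_cdf_bdd (ms j) hu0) hj.le
    linarith
  filter_upwards [hlow_ev, hup_ev] with j hj1 hj2
  rw [Real.dist_eq, abs_sub_lt_iff]
  constructor <;> linarith


/-! ### The method of moments -/

theorem method_of_moments {Ω : Type*} [MeasurableSpace Ω] (μ : Measure Ω)
    [IsProbabilityMeasure μ] (Xn : ℕ → Ω → ℝ) (X : Ω → ℝ)
    (hXn : ∀ n, Measurable (Xn n)) (hX : Measurable X)
    (hXnmom : ∀ n k : ℕ, Integrable (fun ω => Xn n ω ^ k) μ)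
    (hXmom : ∀ k : ℕ, Integrable (fun ω => X ω ^ k) μ)
    (hdet : ∀ ν : Measure ℝ, IsProbabilityMeasure ν →
      (∀ k : ℕ, Integrable (fun x => x ^ k) ν) →
      (∀ k : ℕ, ∫ x, x ^ k ∂ν = ∫ ω, X ω ^ k ∂μ) → ν = Measure.map X μ)
    (hconv : ∀ k : ℕ, 1 ≤ k →
      Tendsto (fun n => ∫ ω, Xn n ω ^ k ∂μ) atTop (nhds (∫ ω, X ω ^ k ∂μ))) :
    ∀ f : BoundedContinuousFunction ℝ ℝ,
      Tendsto (fun n => ∫ ω, f (Xn n ω) ∂μ) atTop (nhds (∫ ω, f (X ω) ∂μ)) := by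
  intro f
  set μn : ℕ → Measure ℝ := fun n => Measure.map (Xn n) μ with hμndef
  haveI hprob : ∀ n, IsProbabilityMeasure (μn n) :=
    fun n => Measure.isProbabilityMeasure_map (hXn n).aemeasurable
  have hmomn : ∀ n k, Integrable (fun x : ℝ => x ^ k) (μn n) := fun n k =>
    (integrable_map_measure (continuous_pow k).aestronglyMeasurable
      (hXn n).aemeasurable).2 (by exact hXnmom n k)
  have hintn : ∀ n k, ∫ x, x ^ k ∂(μn n) = ∫ ω, Xn n ω ^ k ∂μ := fun n k =>
    integral_map (hXn n).aemeasurable (continuous_pow k).aestronglyMeasurable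
  have hCk : ∀ k : ℕ, 1 ≤ k → ∃ M : ℝ, 0 < M ∧ ∀ n, ∫ x, x ^ (2*k) ∂(μn n) ≤ M := by
    intro k hk
    obtain ⟨M, hM⟩ := (hconv (2*k) (by omega)).bddAbove_range
    refine ⟨max M 1, lt_of_lt_of_le one_pos (le_max_right _ _), fun n => ?_⟩
    rw [hintn]
    exact le_trans (hM (Set.mem_range_self n)) (le_max_left _ _)
  refine tendsto_of_subseq_tendsto (fun ns hns => ?_)
  set y : ℕ → (∀ _ : ℚ, Icc (0:ℝ) 1) :=
    fun j q => ⟨cdf (μn (ns j)) q, cdf_nonneg _ _, cdf_le_one _ _⟩ with hydef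
  obtain ⟨a, φ, hφ, hconv'⟩ := CompactSpace.tendsto_subseq y
  set ms : ℕ → Measure ℝ := fun j => μn (ns (φ j)) with hmsdef
  haveI : ∀ j, IsProbabilityMeasure (ms j) := fun j => hprob _
  set H : ℚ → ℝ := fun q => (a q : ℝ) with hHdef
  have hH : ∀ q : ℚ, Tendsto (fun j => cdf (ms j) (q:ℝ)) atTop (nhds (H q)) := fun q =>
    (continuous_subtype_val.tendsto _).comp (((continuous_apply q).tendsto a).comp hconv')
  obtain ⟨C2, hC2pos, hC2⟩ := hCk 1 le_rfl
  have hmom2 : ∀ j, Integrable (fun x : ℝ => x ^ (2*1)) (ms j) := fun j => hmomn _ (2*1)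
  have hCb2 : ∀ j, ∫ x, x ^ (2*1) ∂(ms j) ≤ C2 := fun j => hC2 _
  have hae := mm_ae_tendsto hH hC2pos hmom2 hCb2
  set P : Measure ℝ := volume.restrict (Ioo (0:ℝ) 1) with hPdef
  set Q : ℝ → ℝ := mmQF (mmG H) with hQdef
  have haem : AEMeasurable Q P :=
    aemeasurable_restrict_of_monotoneOn measurableSet_Ioo
      (mm_Q_monoOn hH hmom2 hCb2 le_rfl hC2pos)
  set ρ : Measure ℝ := Measure.map Q P with hρdef
  haveI hρprob : IsProbabilityMeasure ρ := Measure.isProbabilityMeasure_map haem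
  -- the key per-moment convergence
  have key : ∀ k : ℕ, 1 ≤ k → Integrable (fun u => Q u ^ k) P ∧
      Tendsto (fun j => ∫ x, x ^ k ∂(ms j)) atTop (nhds (∫ u, Q u ^ k ∂P)) := by
    intro k hk
    obtain ⟨M, hM0, hMb⟩ := hCk k hk
    set E : ℝ := (4:ℝ)^k * M with hEdef
    have hE : 0 < E := by positivity
    have hME : M ≤ E := by nlinarith [one_le_pow₀ (by norm_num : (1:ℝ) ≤ 4) (n := k)]
    have hmomk : ∀ j, Integrable (fun x : ℝ => x ^ (2*k)) (ms j) := fun j => hmomn _ (2*k)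
    have hMbj : ∀ j, ∫ x, x ^ (2*k) ∂(ms j) ≤ M := fun j => hMb _
    have hlowj : ∀ j, ∀ x : ℝ, 0 < x → 1 - E / x ^ (2*k) ≤ cdf (ms j) x := by
      intro j x hx
      have h1 := mm_cdf_lower (hmomk j) (hMbj j) hx
      have hx2k := mm_even_pow_pos hx.ne' k
      have h2 : M / x ^ (2*k) ≤ E / x ^ (2*k) := by
        rw [div_le_div_iff₀ hx2k hx2k]
        nlinarith
      linarith
    have hupj : ∀ j, ∀ x : ℝ, x < 0 → cdf (ms j) x ≤ E / x ^ (2*k) := by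
      intro j x hx
      have h1 := mm_cdf_upper (hmomk j) (hMbj j) hx
      have hx2k := mm_even_pow_pos hx.ne k
      have h2 : M / x ^ (2*k) ≤ E / x ^ (2*k) := by
        rw [div_le_div_iff₀ hx2k hx2k]
        nlinarith
      linarith
    have hGlow : ∀ x : ℝ, 0 < x → 1 - E / x ^ (2*k) ≤ mmG H x := by
      intro x hx
      have h1 := mm_G_lower hH hmomk hMbj hM0 hx
      have hx2k := mm_even_pow_pos hx.ne' k
      have h2 : M / x ^ (2*k) ≤ E / x ^ (2*k) := by
        rw [div_le_div_iff₀ hx2k hx2k]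
        nlinarith
      linarith
    have hGup : ∀ x : ℝ, x < 0 → mmG H x ≤ E / x ^ (2*k) := by
      intro x hx
      have h1 := mm_G_upper hH hmomk hMbj hM0 hx
      simpa only [hEdef] using h1
    set gdom : ℝ → ℝ := fun u => 3^k * (Real.sqrt (E/(1-u)) + Real.sqrt (E/u) + 1) with hgdef
    have hgint : Integrable gdom P := mm_gdom_integrable hE.le (3^k)
    have hmeasj : ∀ j, AEStronglyMeasurable (fun u => mmQF (cdf (ms j)) u ^ k) P :=
      fun j => ((mm_cdf_aemeas (ms j)).pow_const k).aestronglyMeasurable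
    have hbnd : ∀ j, ∀ᵐ u ∂P, ‖mmQF (cdf (ms j)) u ^ k‖ ≤ gdom u := by
      intro j
      rw [hPdef, ae_restrict_iff' measurableSet_Ioo]
      refine Eventually.of_forall (fun u hu => ?_)
      rw [Real.norm_eq_abs, abs_pow]
      exact mm_qf_pow_le hk hE (hlowj j) (hupj j) hu
    have hQbnd : ∀ᵐ u ∂P, ‖Q u ^ k‖ ≤ gdom u := by
      rw [hPdef, ae_restrict_iff' measurableSet_Ioo]
      refine Eventually.of_forall (fun u hu => ?_)
      rw [Real.norm_eq_abs, abs_pow]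
      exact mm_qf_pow_le hk hE hGlow hGup hu
    have hlim : ∀ᵐ u ∂P, Tendsto (fun j => mmQF (cdf (ms j)) u ^ k) atTop (nhds (Q u ^ k)) :=
      hae.mono fun u hu => hu.pow k
    have hQmeas : AEStronglyMeasurable (fun u => Q u ^ k) P :=
      (haem.pow_const k).aestronglyMeasurable
    have hQint : Integrable (fun u => Q u ^ k) P := Integrable.mono' hgint hQmeas hQbnd
    have htend := tendsto_integral_of_dominated_convergence gdom hmeasj hgint hbnd hlim
    refine ⟨hQint, ?_⟩
    have heq : ∀ j, ∫ x, x ^ k ∂(ms j) = ∫ u, mmQF (cdf (ms j)) u ^ k ∂P := by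
      intro j
      conv_lhs => rw [← mm_map_qf (ms j)]
      rw [integral_map (mm_cdf_aemeas (ms j)) (continuous_pow k).aestronglyMeasurable]
    have hfeq : (fun j => ∫ x, x ^ k ∂(ms j))
        = fun j => ∫ u, mmQF (cdf (ms j)) u ^ k ∂P := funext heq
    rw [hfeq]
    exact htend
  -- moments of ρ agree with those of X
  have hρint : ∀ k : ℕ, Integrable (fun x : ℝ => x ^ k) ρ := by
    intro k
    rcases Nat.eq_zero_or_pos k with hk | hk
    · subst hk; simp only [pow_zero]; exact integrable_const 1
    · rw [hρdef]
      refine (integrable_map_measure (continuous_pow k).aestronglyMeasurable haem).2 ?_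
      exact (key k hk).1
  have hρmom : ∀ k : ℕ, ∫ x, x ^ k ∂ρ = ∫ ω, X ω ^ k ∂μ := by
    intro k
    rcases Nat.eq_zero_or_pos k with hk | hk
    · subst hk; simp
    · have h1 : ∫ x, x ^ k ∂ρ = ∫ u, Q u ^ k ∂P := by
        rw [hρdef, integral_map haem (continuous_pow k).aestronglyMeasurable]
      have h3 : Tendsto (fun j => ∫ x, x ^ k ∂(ms j)) atTop (nhds (∫ ω, X ω ^ k ∂μ)) := by
        have hcomp := (hconv k hk).comp (hns.comp hφ.tendsto_atTop)
        have hfe : (fun j => ∫ x, x ^ k ∂(ms j))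
            = fun j => ∫ ω, Xn (ns (φ j)) ω ^ k ∂μ := by
          funext j; exact hintn _ k
        rw [hfe]; exact hcomp
      rw [h1, tendsto_nhds_unique (key k hk).2 h3]
  have hρeq : ρ = Measure.map X μ := hdet ρ hρprob hρint hρmom
  -- conclude by dominated convergence for `f`
  refine ⟨φ, ?_⟩
  have hfj : ∀ j, ∫ ω, f (Xn (ns (φ j)) ω) ∂μ = ∫ u, f (mmQF (cdf (ms j)) u) ∂P := by
    intro j
    have e1 : ∫ ω, f (Xn (ns (φ j)) ω) ∂μ = ∫ x, f x ∂(ms j) :=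
      (integral_map (hXn _).aemeasurable f.continuous.aestronglyMeasurable).symm
    rw [e1]
    conv_lhs => rw [← mm_map_qf (ms j)]
    rw [integral_map (mm_cdf_aemeas (ms j)) f.continuous.aestronglyMeasurable]
  have hfX : ∫ ω, f (X ω) ∂μ = ∫ u, f (Q u) ∂P := by
    have e1 : ∫ ω, f (X ω) ∂μ = ∫ x, f x ∂(Measure.map X μ) :=
      (integral_map hX.aemeasurable f.continuous.aestronglyMeasurable).symm
    rw [e1, ← hρeq, hρdef, integral_map haem f.continuous.aestronglyMeasurable]
  have hmf : ∀ j, AEStronglyMeasurable (fun u => f (mmQF (cdf (ms j)) u)) P :=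
    fun j => f.continuous.aestronglyMeasurable.comp_aemeasurable (mm_cdf_aemeas (ms j))
  have hbf : ∀ j, ∀ᵐ u ∂P, ‖f (mmQF (cdf (ms j)) u)‖ ≤ ‖f‖ :=
    fun j => Eventually.of_forall fun u => f.norm_coe_le_norm _
  have hlimf : ∀ᵐ u ∂P, Tendsto (fun j => f (mmQF (cdf (ms j)) u)) atTop (nhds (f (Q u))) :=
    hae.mono fun u hu => (f.continuous.tendsto _).comp hu
  have hfin := tendsto_integral_of_dominated_convergence (fun _ => ‖f‖) hmf
    (integrable_const _) hbf hlimf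
  have hfeq2 : (fun j => ∫ ω, f (Xn (ns (φ j)) ω) ∂μ)
      = fun j => ∫ u, f (mmQF (cdf (ms j)) u) ∂P := funext hfj
  rw [hfX, hfeq2]
  exact hfin
end
end
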